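/- arXiv:1305.0808 — 7 statements merged into one kernel-verified Lean document; each statement's English description precedes it below -/
import Mathlib

section
/- Let G=(V,E) be a simple graph in which every vertex has degree at most d, and let n ≥ d+2. Let C_n ⊆ {1,…,n}^V be the set of proper vertex n-colorings of G, i.e. maps x with x_v ≠ x_w whenever (v,w) ∈ E. Then C_n has the pivot property: for any x,y ∈ C_n which differ at only finitely many vertices, there exists a finite sequence x = x⁽¹⁾, x⁽²⁾, …, x⁽ᵏ⁾ = y of elements of C_n such that each consecutive pair x⁽ⁱ⁾, x⁽ⁱ⁺¹⁾ differs at exactly one vertex. -/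
/-!
Pick a vertex `v` where `x` and `y` disagree. Every neighbour of `v` that currently carries the
colour `y v` sees at most `d` neighbour colours, so with `n ≥ d + 2` colours it can be recoloured,
one vertex at a time, to a colour different from `y v` and from all its neighbours. Afterwards `v`
itself can be recoloured to `y v`. A recoloured neighbour `w` had colour `y v ≠ y w`, so it was
already in the disagreement set, which therefore loses `v` and gains nothing; induct on it.
-/

open Function Relation

namespace SimpleGraph

variable {V α : Type*} (G : SimpleGraph V)

def IsProperColoring (x : V → α) : Prop :=
  ∀ v w, G.Adj v w → x v ≠ x w

def RecolorStep (x y : V → α) : Prop :=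
  G.IsProperColoring x ∧ G.IsProperColoring y ∧ ∃! v, x v ≠ y v

variable {G}

lemma exists_ne_forall_adj_ne {d : ℕ} {w : V} (hlf : (G.neighborSet w).Finite)
    (hdeg : (G.neighborSet w).ncard ≤ d) (hα : d + 2 ≤ Nat.card α) (x : V → α) (a : α) :
    ∃ c, c ≠ a ∧ ∀ u, G.Adj w u → c ≠ x u := by
  have hcard : (insert a (x '' G.neighborSet w)).ncard < (Set.univ : Set α).ncard :=
    calc (insert a (x '' G.neighborSet w)).ncard
        ≤ (x '' G.neighborSet w).ncard + 1 := Set.ncard_insert_le _ _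
      _ ≤ (G.neighborSet w).ncard + 1 := by gcongr; exact Set.ncard_image_le hlf
      _ < (Set.univ : Set α).ncard := by rw [Set.ncard_univ]; omega
  obtain ⟨c, -, hc⟩ := Set.exists_mem_notMem_of_ncard_lt_ncard hcard ((hlf.image x).insert a)
  simp only [Set.mem_insert_iff, Set.mem_image, mem_neighborSet, not_or, not_exists,
    not_and] at hc
  exact ⟨c, hc.1, fun u hu hcu => hc.2 u hu hcu.symm⟩

lemma IsProperColoring.update [DecidableEq V] {x : V → α} (hx : G.IsProperColoring x) {w : V}
    {c : α} (hc : ∀ u, G.Adj w u → c ≠ x u) : G.IsProperColoring (update x w c) := by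
  intro p q hpq
  rcases eq_or_ne p w with rfl | hp
  · rw [update_self, update_of_ne (G.ne_of_adj hpq).symm]
    exact hc q hpq
  rcases eq_or_ne q w with rfl | hq
  · rw [update_self, update_of_ne hp]
    exact (hc p hpq.symm).symm
  rw [update_of_ne hp, update_of_ne hq]
  exact hx p q hpq

lemma RecolorStep.isProperColoring_right {x y : V → α} (h : G.RecolorStep x y) :
    G.IsProperColoring y :=
  h.2.1

lemma IsProperColoring.of_reflTransGen {x y : V → α} (hx : G.IsProperColoring x)
    (h : ReflTransGen G.RecolorStep x y) : G.IsProperColoring y := by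
  induction h with
  | refl => exact hx
  | tail _ hstep _ => exact hstep.isProperColoring_right

lemma reflTransGen_recolorStep_update [DecidableEq V] {x : V → α} (hx : G.IsProperColoring x)
    {w : V} {c : α} (hc : ∀ u, G.Adj w u → c ≠ x u) :
    ReflTransGen G.RecolorStep x (update x w c) := by
  by_cases hcw : c = x w
  · rw [update_eq_self_iff.mpr hcw]
  refine .single ⟨hx, hx.update hc, w, by simpa [eq_comm] using hcw, fun u hu => ?_⟩
  by_contra huw
  exact hu (update_of_ne huw c x).symm

lemma exists_reflTransGen_forall_mem_ne [DecidableEq V]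
    (hfree : ∀ (x : V → α) (w : V) (a : α), ∃ c, c ≠ a ∧ ∀ u, G.Adj w u → c ≠ x u)
    (a : α) {S : Set V} (hS : S.Finite) {x : V → α} (hx : G.IsProperColoring x) :
    ∃ x', ReflTransGen G.RecolorStep x x' ∧ (∀ u, x' u ≠ x u → u ∈ S ∧ x u = a) ∧
      ∀ w ∈ S, x' w ≠ a := by
  induction S, hS using Set.Finite.induction_on generalizing x with
  | empty => exact ⟨x, .refl, fun u h => (h rfl).elim, by simp⟩
  | @insert w S hwS _ ih =>
    obtain ⟨x₁, hx₁, hchanged, havoid⟩ := ih hx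
    have hx₁w : x₁ w = x w := by
      by_contra h
      exact hwS (hchanged w h).1
    have hproper₁ := hx.of_reflTransGen hx₁
    obtain ⟨c, hc, hca, hcw⟩ :
        ∃ c, (∀ u, G.Adj w u → c ≠ x₁ u) ∧ c ≠ a ∧ (c ≠ x₁ w → x₁ w = a) := by
      by_cases hw : x₁ w = a
      · obtain ⟨c, hca, hc⟩ := hfree x₁ w a
        exact ⟨c, hc, hca, fun _ => hw⟩
      · exact ⟨x₁ w, hproper₁ w, hw, absurd rfl⟩
    refine ⟨update x₁ w c, hx₁.trans (reflTransGen_recolorStep_update hproper₁ hc), ?_, ?_⟩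
    · intro u hu
      rcases eq_or_ne u w with rfl | huw
      · rw [update_self, ← hx₁w] at hu
        rw [← hx₁w]
        exact ⟨Set.mem_insert _ _, hcw hu⟩
      · rw [update_of_ne huw] at hu
        exact ⟨Set.mem_insert_of_mem _ (hchanged u hu).1, (hchanged u hu).2⟩
    · rintro u (rfl | hu)
      · rwa [update_self]
      · rw [update_of_ne (ne_of_mem_of_not_mem hu hwS)]
        exact havoid u hu

lemma exists_reflTransGen_diff_subset [DecidableEq V]
    (hfree : ∀ (x : V → α) (w : V) (a : α), ∃ c, c ≠ a ∧ ∀ u, G.Adj w u → c ≠ x u)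
    {v : V} (hfin : (G.neighborSet v).Finite) {x y : V → α} (hx : G.IsProperColoring x)
    (hy : G.IsProperColoring y) :
    ∃ x', ReflTransGen G.RecolorStep x x' ∧ {u | x' u ≠ y u} ⊆ {u | x u ≠ y u} \ {v} := by
  obtain ⟨x₁, hx₁, hchanged, havoid⟩ := exists_reflTransGen_forall_mem_ne hfree (y v) hfin hx
  refine ⟨update x₁ v (y v), hx₁.trans (reflTransGen_recolorStep_update
    (hx.of_reflTransGen hx₁) fun u hu => (havoid u hu).symm), fun u hu => ?_⟩
  rcases eq_or_ne u v with rfl | huv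
  · simp at hu
  rw [Set.mem_ofPred_eq, update_of_ne huv] at hu
  refine ⟨?_, huv⟩
  by_cases h : x₁ u = x u
  · rwa [h] at hu
  · obtain ⟨hvu, hxu⟩ := hchanged u h
    rw [Set.mem_ofPred_eq, hxu]
    exact hy v u hvu

lemma reflTransGen_of_finite_diff [DecidableEq V]
    (hfree : ∀ (x : V → α) (w : V) (a : α), ∃ c, c ≠ a ∧ ∀ u, G.Adj w u → c ≠ x u)
    (hlf : ∀ v, (G.neighborSet v).Finite) {x y : V → α} (hx : G.IsProperColoring x)
    (hy : G.IsProperColoring y) (hdiff : {v | x v ≠ y v}.Finite) :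
    ReflTransGen G.RecolorStep x y := by
  suffices ∀ D : Set V, D.Finite → ∀ x, G.IsProperColoring x → {v | x v ≠ y v} ⊆ D →
      ReflTransGen G.RecolorStep x y from this _ hdiff x hx subset_rfl
  intro D hD
  induction D, hD using Set.Finite.induction_on with
  | empty =>
    intro x _ hsub
    obtain rfl : x = y := funext fun v => by
      by_contra h
      exact hsub h
    exact .refl
  | @insert v D _ _ ih =>
    intro x hx hsub
    obtain ⟨x', hx', hsub'⟩ := exists_reflTransGen_diff_subset hfree (hlf v) hx hy
    exact hx'.trans <| ih x' (hx.of_reflTransGen hx') <|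
      hsub'.trans (Set.sdiff_singleton_subset_iff.mpr hsub)

lemma exists_chain_of_reflTransGen {x y : V → α} (hx : G.IsProperColoring x)
    (h : ReflTransGen G.RecolorStep x y) :
    ∃ (k : ℕ) (c : ℕ → V → α), c 0 = x ∧ c k = y ∧
      (∀ i ≤ k, G.IsProperColoring (c i)) ∧ ∀ i < k, ∃! v, c i v ≠ c (i + 1) v := by
  induction h with
  | refl => exact ⟨0, fun _ => x, rfl, rfl, fun _ _ => hx, fun _ h => absurd h (Nat.not_lt_zero _)⟩
  | @tail z w _ hzw ih =>
    obtain ⟨k, c, hc0, hck, hproper, hstep⟩ := ih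
    refine ⟨k + 1, fun i => if i ≤ k then c i else w, by simp [hc0], by simp, ?_, ?_⟩
    · intro i _
      dsimp only
      split_ifs with hik
      · exact hproper i hik
      · exact hzw.isProperColoring_right
    · intro i hi
      rcases (Nat.lt_succ_iff.mp hi).lt_or_eq with hik | rfl
      · simpa [hik.le, Nat.succ_le_of_lt hik] using hstep i hik
      · simpa [hck] using hzw.2.2

end SimpleGraph

/-- Let `G` be a simple graph with all degrees at most `d` and let
`n ≥ d + 2`. Then the space of proper `n`-colorings of `G` has the pivot property:
any two proper colorings differing at finitely many vertices are connected by a chain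
of proper colorings in which consecutive colorings differ at exactly one vertex. -/
theorem colorings_pivot_property
    {V : Type*} (G : SimpleGraph V) (d n : ℕ)
    (hlf : ∀ v : V, (G.neighborSet v).Finite)
    (hdeg : ∀ v : V, (G.neighborSet v).ncard ≤ d)
    (hn : d + 2 ≤ n)
    (x y : V → Fin n)
    (hx : ∀ v w : V, G.Adj v w → x v ≠ x w)
    (hy : ∀ v w : V, G.Adj v w → y v ≠ y w)
    (hdiff : {v | x v ≠ y v}.Finite) :
    ∃ (k : ℕ) (c : ℕ → V → Fin n),
      c 0 = x ∧ c k = y ∧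
      (∀ i ≤ k, ∀ v w : V, G.Adj v w → c i v ≠ c i w) ∧
      (∀ i < k, ∃! v : V, c i v ≠ c (i + 1) v) := by
  classical
  have hα : d + 2 ≤ Nat.card (Fin n) := by simpa using hn
  exact SimpleGraph.exists_chain_of_reflTransGen hx <|
    SimpleGraph.reflTransGen_of_finite_diff
      (fun x w a => SimpleGraph.exists_ne_forall_adj_ne (hlf w) (hdeg w) hα x a) hlf hx hy hdiff
end

section
/- Let A be a finite set and X ⊆ A^{ℤ^d} a shift-invariant topological Markov field with the pivot property. Then the ℝ-vector space M^σ_X of shift-invariant Markov cocycles on X is finite-dimensional; in fact its dimension is at most |B_{{0}∪∂{0}}(X)|², where B_W(X) denotes the set of restrictions of points of X to W. -/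
open scoped BigOperators

/-!
By the pivot property any two homoclinic points are joined by a chain of single-site changes, so
by the cocycle identity a cocycle is determined by its values on pairs differing at one site;
shift invariance moves that site to the origin, and the Markov property makes the value on such a
pair depend only on the two patterns it shows on `{0} ∪ ∂{0}`. Hence evaluating a shift-invariant
Markov cocycle at one representative of each realised pair of patterns is an injective linear map
into a space of dimension at most `|B_{{0}∪∂{0}}(X)|²`.
-/

/-- Sites of the standard Cayley graph of `ℤ^d`. -/
abbrev Site (d : ℕ) := Fin d → ℤ

/-- Adjacency in the standard Cayley graph of `ℤ^d`: `‖n - m‖₁ = 1`. -/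
def adjacent {d : ℕ} (n m : Site d) : Prop :=
  (∑ i, |n i - m i|) = 1

/-- The (outer) boundary of a set of sites. -/
def siteBdry {d : ℕ} (F : Set (Site d)) : Set (Site d) :=
  {m | m ∉ F ∧ ∃ n ∈ F, adjacent n m}

/-- The shift action of `ℤ^d` on configurations. -/
def shift {d : ℕ} {A : Type*} (n : Site d) (x : Site d → A) : Site d → A :=
  fun m => x (m + n)

/-- The homoclinic relation of `X`. -/
def DeltaOf {d : ℕ} {A : Type*} (X : Set (Site d → A)) :
    Set ((Site d → A) × (Site d → A)) :=
  {p | p.1 ∈ X ∧ p.2 ∈ X ∧ {n | p.1 n ≠ p.2 n}.Finite}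

/-- The cocycle condition for a function on the homoclinic relation. -/
def IsCocycle {d : ℕ} {A : Type*} (X : Set (Site d → A)) (M : ↥(DeltaOf X) → ℝ) : Prop :=
  ∀ (x y z : Site d → A) (hxy : (x, y) ∈ DeltaOf X)
    (hyz : (y, z) ∈ DeltaOf X) (hxz : (x, z) ∈ DeltaOf X),
    M ⟨(x, z), hxz⟩ = M ⟨(x, y), hxy⟩ + M ⟨(y, z), hyz⟩

/-- The Markov condition: if `x,y` agree outside the finite set `F`, then `M(x,y)` depends
only on the restrictions of `x` and `y` to `F ∪ ∂F`. -/
def IsMarkovProp {d : ℕ} {A : Type*} (X : Set (Site d → A)) (M : ↥(DeltaOf X) → ℝ) : Prop :=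
  ∀ (x y x' y' : Site d → A) (hxy : (x, y) ∈ DeltaOf X) (hxy' : (x', y') ∈ DeltaOf X)
    (F : Set (Site d)), F.Finite →
    (∀ n ∉ F, x n = y n) → (∀ n ∉ F, x' n = y' n) →
    (∀ n ∈ F ∪ siteBdry F, x n = x' n) → (∀ n ∈ F ∪ siteBdry F, y n = y' n) →
    M ⟨(x, y), hxy⟩ = M ⟨(x', y'), hxy'⟩

/-- Shift-invariance of a cocycle on the homoclinic relation. -/
def IsShiftInvCocycle {d : ℕ} {A : Type*} (X : Set (Site d → A)) (M : ↥(DeltaOf X) → ℝ) : Prop :=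
  ∀ (n : Site d) (x y : Site d → A) (hxy : (x, y) ∈ DeltaOf X)
    (hs : (shift n x, shift n y) ∈ DeltaOf X),
    M ⟨(shift n x, shift n y), hs⟩ = M ⟨(x, y), hxy⟩

lemma abs_sub_le_one_of_adjacent {d : ℕ} {n m : Site d} (h : adjacent n m) (i : Fin d) :
    |n i - m i| ≤ 1 :=
  h ▸ Finset.single_le_sum (f := fun j => |n j - m j|) (fun j _ => abs_nonneg _)
    (Finset.mem_univ i)

lemma finite_setOf_adjacent {d : ℕ} (n : Site d) : {m | adjacent n m}.Finite := by
  refine (Set.Finite.pi fun i => Set.finite_Icc (n i - 1) (n i + 1)).subset ?_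
  intro m hm i _
  have := abs_le.mp (abs_sub_le_one_of_adjacent hm i)
  exact ⟨by linarith, by linarith⟩

lemma Set.Finite.siteBdry {d : ℕ} {F : Set (Site d)} (hF : F.Finite) : (siteBdry F).Finite :=
  (hF.biUnion fun n _ => finite_setOf_adjacent n).subset
    fun _ ⟨_, _, hn, hadj⟩ => Set.mem_biUnion hn hadj

abbrev window (d : ℕ) : Set (Site d) := {0} ∪ siteBdry {0}

lemma window_finite (d : ℕ) : (window d).Finite :=
  (Set.finite_singleton 0).union (Set.finite_singleton 0).siteBdry

/-- `B_W(X)` for `W = {0} ∪ ∂{0}`. -/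
abbrev windowPatterns {d : ℕ} {A : Type*} (X : Set (Site d → A)) : Set (window d → A) :=
  {f | ∃ x ∈ X, ∀ m : window d, f m = x m.val}

def HasPivotProperty {d : ℕ} {A : Type*} (X : Set (Site d → A)) : Prop :=
  ∀ x ∈ X, ∀ y ∈ X, {n | x n ≠ y n}.Finite →
    ∃ (k : ℕ) (c : ℕ → Site d → A),
      c 0 = x ∧ c k = y ∧ (∀ i ≤ k, c i ∈ X) ∧
      ∀ i < k, ∃! v : Site d, c i v ≠ c (i + 1) v

section Homoclinic

variable {d : ℕ} {A : Type*} {X : Set (Site d → A)} {x y z : Site d → A}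

lemma mem_deltaOf_of_eq_off {F : Set (Site d)} (hF : F.Finite) (hx : x ∈ X) (hy : y ∈ X)
    (h : ∀ n ∉ F, x n = y n) : (x, y) ∈ DeltaOf X :=
  ⟨hx, hy, hF.subset fun n hn => by_contra fun hnF => hn (h n hnF)⟩

lemma deltaOf_symm (h : (x, y) ∈ DeltaOf X) : (y, x) ∈ DeltaOf X :=
  ⟨h.2.1, h.1, by simpa only [ne_comm] using h.2.2⟩

lemma deltaOf_trans (hxy : (x, y) ∈ DeltaOf X) (hyz : (y, z) ∈ DeltaOf X) :
    (x, z) ∈ DeltaOf X :=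
  mem_deltaOf_of_eq_off (hxy.2.2.union hyz.2.2) hxy.1 hyz.2.1 fun n hn => by
    simp only [Set.mem_union, Set.mem_ofPred_eq, not_or, not_not] at hn
    exact hn.1.trans hn.2

end Homoclinic

def markovCocycles {d : ℕ} {A : Type*} (X : Set (Site d → A)) :
    Submodule ℝ (DeltaOf X → ℝ) where
  carrier := {M | IsCocycle X M ∧ IsMarkovProp X M ∧ IsShiftInvCocycle X M}
  add_mem' := by
    rintro M N ⟨hM, hM', hM''⟩ ⟨hN, hN', hN''⟩
    refine ⟨fun x y z hxy hyz hxz => ?_, fun x y x' y' hxy hxy' F hF h₁ h₂ h₃ h₄ => ?_,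
      fun n x y hxy hs => ?_⟩
    · simp only [Pi.add_apply, hM x y z hxy hyz hxz, hN x y z hxy hyz hxz]
      ring
    · simp only [Pi.add_apply, hM' x y x' y' hxy hxy' F hF h₁ h₂ h₃ h₄,
        hN' x y x' y' hxy hxy' F hF h₁ h₂ h₃ h₄]
    · simp only [Pi.add_apply, hM'' n x y hxy hs, hN'' n x y hxy hs]
  zero_mem' := ⟨fun _ _ _ _ _ _ => by simp, fun _ _ _ _ _ _ _ _ _ _ _ _ => rfl,
    fun _ _ _ _ _ => rfl⟩
  smul_mem' := by
    rintro c M ⟨hM, hM', hM''⟩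
    refine ⟨fun x y z hxy hyz hxz => ?_, fun x y x' y' hxy hxy' F hF h₁ h₂ h₃ h₄ => ?_,
      fun n x y hxy hs => ?_⟩
    · simp only [Pi.smul_apply, smul_eq_mul, hM x y z hxy hyz hxz]
      ring
    · simp only [Pi.smul_apply, hM' x y x' y' hxy hxy' F hF h₁ h₂ h₃ h₄]
    · simp only [Pi.smul_apply, hM'' n x y hxy hs]

section Cocycle

variable {d : ℕ} {A : Type*} {X : Set (Site d → A)} {M : DeltaOf X → ℝ}

lemma IsCocycle.apply_self (hM : IsCocycle X M) {x : Site d → A} (h : (x, x) ∈ DeltaOf X) :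
    M ⟨(x, x), h⟩ = 0 := by
  linarith [hM x x x h h h]

lemma IsCocycle.eq_zero_of_pivot (hX : HasPivotProperty X) (hM : IsCocycle X M)
    (h₁ : ∀ (v : Site d) (x y : Site d → A) (h : (x, y) ∈ DeltaOf X),
      (∀ n ≠ v, x n = y n) → M ⟨(x, y), h⟩ = 0) : M = 0 := by
  funext ⟨⟨x, y⟩, h⟩
  obtain ⟨k, c, rfl, rfl, hcX, hstep⟩ := hX x h.1 y h.2.1 h.2.2
  suffices ∀ j ≤ k, ∀ hj : (c 0, c j) ∈ DeltaOf X, M ⟨(c 0, c j), hj⟩ = 0 from this k le_rfl h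
  intro j
  induction j with
  | zero => exact fun _ => hM.apply_self
  | succ j ih =>
    intro hjk hj
    obtain ⟨v, -, hv⟩ := hstep j hjk
    have hagree : ∀ n ≠ v, c j n = c (j + 1) n := fun n hn => by_contra fun hne => hn (hv n hne)
    have hj' : (c j, c (j + 1)) ∈ DeltaOf X :=
      mem_deltaOf_of_eq_off (Set.finite_singleton v) (hcX j (by omega)) (hcX (j + 1) hjk) hagree
    rw [hM _ _ _ (deltaOf_trans hj (deltaOf_symm hj')) hj' hj, ih (by omega), h₁ v _ _ hj' hagree, add_zero]

end Cocycle

lemma IsShiftInvCocycle.eq_zero_of_eq_zero_at_origin {d : ℕ} {A : Type*}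
    {X : Set (Site d → A)} {M : DeltaOf X → ℝ} (hshift : ∀ n : Site d, shift n '' X = X)
    (hM : IsShiftInvCocycle X M)
    (h₀ : ∀ (x y : Site d → A) (h : (x, y) ∈ DeltaOf X), (∀ n ≠ 0, x n = y n) →
      M ⟨(x, y), h⟩ = 0)
    (v : Site d) (x y : Site d → A) (h : (x, y) ∈ DeltaOf X) (hv : ∀ n ≠ v, x n = y n) :
    M ⟨(x, y), h⟩ = 0 := by
  have hagree : ∀ m ≠ 0, shift v x m = shift v y m := fun m hm =>
    hv (m + v) fun hmv => hm (add_eq_right.mp hmv)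
  have hs : (shift v x, shift v y) ∈ DeltaOf X :=
    mem_deltaOf_of_eq_off (Set.finite_singleton 0) (hshift v ▸ Set.mem_image_of_mem _ h.1)
      (hshift v ▸ Set.mem_image_of_mem _ h.2.1) hagree
  rw [← hM v x y h hs]
  exact h₀ _ _ hs hagree

section Window

variable {d : ℕ} {A : Type*} {X : Set (Site d → A)}

def originPivots (X : Set (Site d → A)) : Set (DeltaOf X) :=
  {z | ∀ n ≠ 0, z.1.1 n = z.1.2 n}

def windowPair (z : DeltaOf X) : (window d → A) × (window d → A) :=
  (fun m => z.1.1 m, fun m => z.1.2 m)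

lemma IsMarkovProp.eq_of_windowPair_eq {M : DeltaOf X → ℝ} (hM : IsMarkovProp X M)
    {z z' : DeltaOf X} (hz : z ∈ originPivots X) (hz' : z' ∈ originPivots X)
    (h : windowPair z = windowPair z') : M z = M z' :=
  hM _ _ _ _ z.2 z'.2 {0} (Set.finite_singleton 0) hz hz'
    (fun n hn => congrFun (congrArg Prod.fst h) ⟨n, hn⟩)
    (fun n hn => congrFun (congrArg Prod.snd h) ⟨n, hn⟩)

lemma ncard_windowPair_image_le [Finite A] :
    (windowPair '' originPivots X).ncard ≤ (windowPatterns X).ncard ^ 2 := by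
  have := (window_finite d).to_subtype
  calc (windowPair '' originPivots X).ncard
      ≤ (windowPatterns X ×ˢ windowPatterns X).ncard := by
        refine Set.ncard_le_ncard ?_ (Set.toFinite _)
        rintro _ ⟨z, -, rfl⟩
        exact ⟨⟨z.1.1, z.2.1, fun _ => rfl⟩, ⟨z.1.2, z.2.2.1, fun _ => rfl⟩⟩
    _ = (windowPatterns X).ncard ^ 2 := by rw [Set.ncard_prod, sq]

/-- Evaluation at a chosen representative of each realised pair of window patterns. -/
noncomputable def evalWindowPairs (X : Set (Site d → A)) :
    (DeltaOf X → ℝ) →ₗ[ℝ] (windowPair '' originPivots X → ℝ) :=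
  LinearMap.funLeft ℝ ℝ fun r => r.2.choose

lemma evalWindowPairs_comp_subtype_injective (hshift : ∀ n : Site d, shift n '' X = X)
    (hX : HasPivotProperty X) :
    Function.Injective ((evalWindowPairs X).comp (markovCocycles X).subtype) := by
  rw [← LinearMap.ker_eq_bot, LinearMap.ker_eq_bot']
  rintro ⟨M, hC, hMk, hS⟩ hM0
  refine Subtype.ext (hC.eq_zero_of_pivot hX (hS.eq_zero_of_eq_zero_at_origin hshift ?_))
  intro x y h h0
  have hr : windowPair ⟨(x, y), h⟩ ∈ windowPair '' originPivots X :=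
    ⟨⟨(x, y), h⟩, h0, rfl⟩
  calc M ⟨(x, y), h⟩ = M hr.choose :=
        hMk.eq_of_windowPair_eq h0 hr.choose_spec.1 hr.choose_spec.2.symm
    _ = 0 := congrFun hM0 ⟨_, hr⟩

end Window

theorem pivot_property_inv_markov_cocycles_finite_dimensional_general
    {A : Type*} [Fintype A]
    (d : ℕ) (X : Set (Site d → A))
    (hshift : ∀ n : Site d, shift n '' X = X)
    (hpivot : ∀ x ∈ X, ∀ y ∈ X, {n | x n ≠ y n}.Finite →
      ∃ (k : ℕ) (c : ℕ → Site d → A),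
        c 0 = x ∧ c k = y ∧ (∀ i ≤ k, c i ∈ X) ∧
        ∀ i < k, ∃! v : Site d, c i v ≠ c (i + 1) v) :
    ∃ P : Submodule ℝ (↥(DeltaOf X) → ℝ),
      (P : Set (↥(DeltaOf X) → ℝ)) =
        {M | IsCocycle X M ∧ IsMarkovProp X M ∧ IsShiftInvCocycle X M} ∧
      FiniteDimensional ℝ ↥P ∧
      Module.finrank ℝ ↥P ≤
        ({f : ↥({(0 : Site d)} ∪ siteBdry {(0 : Site d)}) → A |
          ∃ x ∈ X, ∀ m : ↥({(0 : Site d)} ∪ siteBdry {(0 : Site d)}), f m = x m.val}).ncard ^ 2 := by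
  have := (window_finite d).to_subtype
  have : Fintype (windowPair '' originPivots X) := (Set.toFinite _).fintype
  have hinj := evalWindowPairs_comp_subtype_injective hshift hpivot
  refine ⟨markovCocycles X, rfl, .of_injective _ hinj, ?_⟩
  calc Module.finrank ℝ (markovCocycles X)
      ≤ Fintype.card (windowPair '' originPivots X) := by
        simpa only [Module.finrank_pi] using LinearMap.finrank_le_finrank_of_injective hinj
    _ = (windowPair '' originPivots X).ncard := by
        rw [← Nat.card_eq_fintype_card, Nat.card_coe_set_eq]
    _ ≤ (windowPatterns X).ncard ^ 2 := ncard_windowPair_image_le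

/-- For a shift-invariant topological Markov field `X ⊆ A^{ℤ^d}` with the
pivot property, the space of shift-invariant Markov cocycles on `X` is a finite-dimensional
vector space of dimension at most `|B_{{0}∪∂{0}}(X)|²`. -/
theorem pivot_property_inv_markov_cocycles_finite_dimensional
    {A : Type*} [Fintype A] [TopologicalSpace A] [DiscreteTopology A]
    (d : ℕ) (X : Set (Site d → A))
    (hcompact : IsCompact X)
    (hTMF : ∀ F : Set (Site d), F.Finite → ∀ x ∈ X, ∀ y ∈ X,
      (∀ n ∈ siteBdry F, x n = y n) →
      ∀ z : Site d → A, (∀ n ∈ F, z n = x n) → (∀ n ∉ F, z n = y n) → z ∈ X)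
    (hshift : ∀ n : Site d, shift n '' X = X)
    (hpivot : ∀ x ∈ X, ∀ y ∈ X, {n | x n ≠ y n}.Finite →
      ∃ (k : ℕ) (c : ℕ → Site d → A),
        c 0 = x ∧ c k = y ∧ (∀ i ≤ k, c i ∈ X) ∧
        ∀ i < k, ∃! v : Site d, c i v ≠ c (i + 1) v) :
    ∃ P : Submodule ℝ (↥(DeltaOf X) → ℝ),
      (P : Set (↥(DeltaOf X) → ℝ)) =
        {M | IsCocycle X M ∧ IsMarkovProp X M ∧ IsShiftInvCocycle X M} ∧
      FiniteDimensional ℝ ↥P ∧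
      Module.finrank ℝ ↥P ≤
        ({f : ↥({(0 : Site d)} ∪ siteBdry {(0 : Site d)}) → A |
          ∃ x ∈ X, ∀ m : ↥({(0 : Site d)} ∪ siteBdry {(0 : Site d)}), f m = x m.val}).ncard ^ 2 :=
  pivot_property_inv_markov_cocycles_finite_dimensional_general d X hshift hpivot
end

section
/- Fix d ≥ 2 and an integer r ≥ 2 with r ≠ 4. A configuration x ∈ (ℤ/rℤ)^{ℤ^d} satisfies x_n − x_m = ±1 (mod r) for all n,m ∈ ℤ^d with ‖n−m‖₁ = 1 if and only if there exists a height function x̂ : ℤ^d → ℤ with x̂_n ≡ x_n (mod r) for every n ∈ ℤ^d. Consequently X_r := φ_r(Ht) = { x ∈ (ℤ/rℤ)^{ℤ^d} : x_n − x_m = ±1 (mod r) whenever ‖n−m‖₁ = 1 }. -/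
open scoped BigOperators

/-- The nearest neighbor shift of finite type `X_r`. -/
def Xr (d r : ℕ) : Set (Site d → ZMod r) :=
  {x | ∀ n m : Site d, adjacent n m → x n - x m = 1 ∨ x n - x m = -1}

/-- A height function on `ℤ^d`. -/
def IsHeightFn {d : ℕ} (h : Site d → ℤ) : Prop :=
  ∀ n m : Site d, adjacent n m → |h n - h m| = 1

/-! Along each unit edge the increment of `x ∈ X_r` lifts to a sign `±1`. Around a unit square
the four signs add up to an even integer in `[-4, 4]` that vanishes mod `r`: if `r ∤ 4` it is
therefore `0`, and if `r ∣ 2` all signs can be taken to be `+1`, so the sign field is curl free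
unless `r = 4`. A curl-free integer field on `ℤ^d` is the gradient of its potential, obtained by
summing along coordinate paths, and the potential shifted to lift `x` at the origin lifts `x`
everywhere, since both have the same increments mod `r`. -/

open Finset

section IntPrimitive

variable {G : Type*} [AddCommGroup G]

noncomputable def intPrimitive (f : ℤ → G) (k : ℤ) : G :=
  ∑ t ∈ Ico 0 k, f t - ∑ t ∈ Ico k 0, f t

lemma intPrimitive_add_one (f : ℤ → G) (k : ℤ) :
    intPrimitive f (k + 1) = intPrimitive f k + f k := by
  unfold intPrimitive
  rcases le_or_gt 0 k with hk | hk
  · rw [← sum_Ico_add_eq_sum_Ico_add_one hk, Ico_eq_empty_of_le hk,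
      Ico_eq_empty_of_le (by omega : (0 : ℤ) ≤ k + 1)]
    abel
  · rw [← insert_Ico_add_one_left_eq_Ico hk, sum_insert (by simp),
      Ico_eq_empty_of_le hk.le, Ico_eq_empty_of_le (by omega : k + 1 ≤ 0)]
    abel

lemma intPrimitive_sub (f g : ℤ → G) (k : ℤ) :
    intPrimitive (fun t => f t - g t) k = intPrimitive f k - intPrimitive g k := by
  simp only [intPrimitive, sum_sub_distrib]
  abel

lemma intPrimitive_eq_sub {F f : ℤ → G} (hF : ∀ k, F (k + 1) = F k + f k) (k : ℤ) :
    intPrimitive f k = F k - F 0 := by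
  induction k using Int.induction_on with
  | zero => simp [intPrimitive]
  | succ k ih => rw [intPrimitive_add_one, hF, ih]; abel
  | pred k ih =>
    have hP := intPrimitive_add_one f (-k - 1)
    have hF' := hF (-k - 1)
    rw [sub_add_cancel] at hP hF'
    rw [hP, hF'] at ih
    rw [← add_left_inj (f (-k - 1)), ih]
    abel

end IntPrimitive

section Potential

variable {d : ℕ} {G : Type*} [AddCommGroup G]

def truncate (n : Site d) (k : ℕ) : Site d := fun j => if (j : ℕ) < k then n j else 0

lemma truncate_zero (n : Site d) : truncate n 0 = 0 := by
  funext j; simp [truncate]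

lemma truncate_dim (n : Site d) : truncate n d = n := by
  funext j; simp [truncate, j.isLt]

lemma truncate_succ (n : Site d) (i : Fin d) :
    truncate n (i + 1) = truncate n i + Pi.single i (n i) := by
  funext j
  rcases lt_trichotomy (j : ℕ) i with h | h | h
  · simp [truncate, h, Fin.ne_of_lt h, h.trans (Nat.lt_succ_self _)]
  · simp [truncate, Fin.ext h]
  · simp [truncate, h.not_gt, Fin.ne_of_gt h, (Nat.succ_le_of_lt h).not_gt]

lemma truncate_add_single_of_le (n : Site d) {i j : Fin d} (h : (i : ℕ) ≤ j) :
    truncate (n + Pi.single j 1) i = truncate n i := by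
  funext t
  by_cases ht : (t : ℕ) < i
  · simp [truncate, ht, Fin.ne_of_lt (ht.trans_le h)]
  · simp [truncate, ht]

lemma truncate_add_single_of_lt (n : Site d) {i j : Fin d} (h : (j : ℕ) < i) :
    truncate (n + Pi.single j 1) i = truncate n i + Pi.single j 1 := by
  funext t
  by_cases ht : t = j
  · subst ht; simp [truncate, h]
  · simp [truncate, ht]

def CurlFree (ω : Fin d → Site d → G) : Prop :=
  ∀ i j p, ω i (p + Pi.single j 1) - ω i p = ω j (p + Pi.single i 1) - ω j p

-- `ω` summed along the coordinate path `0 → (n₀, 0, …) → (n₀, n₁, 0, …) → ⋯ → n`.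
noncomputable def potential (ω : Fin d → Site d → G) (n : Site d) : G :=
  ∑ i, intPrimitive (fun k => ω i (truncate n i + Pi.single i k)) (n i)

lemma map_potential {H : Type*} [AddCommGroup H] (φ : G →+ H) (ω : Fin d → Site d → G)
    (n : Site d) : φ (potential ω n) = potential (fun i p => φ (ω i p)) n := by
  simp [potential, intPrimitive, map_sum]

lemma potential_eq_sub_of_gradient {ω : Fin d → Site d → G} {g : Site d → G}
    (hg : ∀ n i, g (n + Pi.single i 1) = g n + ω i n) (n : Site d) :
    potential ω n = g n - g 0 := by
  have hline : ∀ i : Fin d, intPrimitive (fun k => ω i (truncate n i + Pi.single i k)) (n i)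
      = g (truncate n (i + 1)) - g (truncate n i) := by
    intro i
    rw [intPrimitive_eq_sub (F := fun k => g (truncate n i + Pi.single i k)), truncate_succ]
    · simp
    · intro k
      rw [Pi.single_add, ← add_assoc, hg]
  rw [potential, Fintype.sum_congr _ _ hline,
    Fin.sum_univ_eq_sum_range (fun m => g (truncate n (m + 1)) - g (truncate n m)),
    sum_range_sub (fun m => g (truncate n m)), truncate_dim, truncate_zero]

lemma CurlFree.intPrimitive_add_single_sub {ω : Fin d → Site d → G} (hω : CurlFree ω)
    (i j : Fin d) (p : Site d) (k : ℤ) :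
    intPrimitive (fun t => ω i (p + Pi.single j 1 + Pi.single i t)) k
      - intPrimitive (fun t => ω i (p + Pi.single i t)) k = ω j (p + Pi.single i k) - ω j p := by
  rw [← intPrimitive_sub, intPrimitive_eq_sub (F := fun t => ω j (p + Pi.single i t))]
  · simp
  · intro t
    rw [add_right_comm, hω, Pi.single_add, add_assoc]
    abel

lemma CurlFree.potential_add_single {ω : Fin d → Site d → G} (hω : CurlFree ω)
    (n : Site d) (j : Fin d) : potential ω (n + Pi.single j 1) = potential ω n + ω j n := by
  set c : ℕ → G := fun m => if m ≤ j then 0 else ω j (truncate n m)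
  have hterm : ∀ i : Fin d,
      intPrimitive (fun k => ω i (truncate (n + Pi.single j 1) i + Pi.single i k))
          ((n + Pi.single j 1 : Site d) i)
        - intPrimitive (fun k => ω i (truncate n i + Pi.single i k)) (n i) = c (i + 1) - c i := by
    intro i
    rcases lt_trichotomy (i : ℕ) j with h | h | h
    · simp [c, truncate_add_single_of_le n h.le, Fin.ne_of_lt h, h.le, Nat.succ_le_of_lt h]
    · obtain rfl := Fin.ext h
      simp [c, truncate_add_single_of_le n le_rfl, intPrimitive_add_one, truncate_succ]
    · have hi : (n + Pi.single j 1 : Site d) i = n i := by simp [Fin.ne_of_gt h]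
      rw [truncate_add_single_of_lt n h, hi, hω.intPrimitive_add_single_sub]
      simp [c, h.not_ge, (show ¬ i < j from Nat.lt_asymm h), truncate_succ]
  rw [← sub_eq_iff_eq_add', potential, potential, ← sum_sub_distrib, Fintype.sum_congr _ _ hterm,
    Fin.sum_univ_eq_sum_range (fun m => c (m + 1) - c m), sum_range_sub]
  simp [c, truncate_dim]

end Potential

section Adjacency

variable {d : ℕ}

lemma adjacent_iff_exists_single {n m : Site d} :
    adjacent n m ↔ ∃ i s, |s| = 1 ∧ n = m + Pi.single i s := by
  constructor
  · intro h
    unfold adjacent at h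
    obtain ⟨j, hj⟩ : ∃ j, n j - m j ≠ 0 := by
      by_contra! h0
      simp [h0] at h
    have hpair : ∀ i ≠ j, |n i - m i| + |n j - m j| ≤ 1 := fun i hij =>
      calc |n i - m i| + |n j - m j| = ∑ k ∈ {i, j}, |n k - m k| := by rw [sum_pair hij]
        _ ≤ 1 := h ▸ sum_le_sum_of_subset_of_nonneg (subset_univ _) fun _ _ _ => abs_nonneg _
    have hj_le : |n j - m j| ≤ 1 :=
      h ▸ single_le_sum (fun k _ => abs_nonneg (n k - m k)) (mem_univ j)
    have hj_ge : 1 ≤ |n j - m j| := Int.one_le_abs hj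
    refine ⟨j, n j - m j, le_antisymm hj_le hj_ge, funext fun i => ?_⟩
    by_cases hij : i = j
    · subst hij; simp
    · have : n i = m i := sub_eq_zero.1 (abs_nonpos_iff.1 (by linarith [hpair i hij]))
      simp [hij, this]
  · rintro ⟨i, s, hs, rfl⟩
    simp only [adjacent, Pi.add_apply, add_sub_cancel_left]
    rw [Fintype.sum_eq_single i fun k hk => by simp [hk], Pi.single_eq_same, hs]

lemma adjacent_add_single (p : Site d) (i : Fin d) : adjacent (p + Pi.single i 1) p :=
  adjacent_iff_exists_single.2 ⟨i, 1, abs_one, rfl⟩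

lemma isHeightFn_of_abs_sub_add_single {h : Site d → ℤ}
    (hh : ∀ n i, |h (n + Pi.single i 1) - h n| = 1) : IsHeightFn h := by
  intro n m hnm
  obtain ⟨i, s, hs, rfl⟩ := adjacent_iff_exists_single.1 hnm
  rcases abs_eq_abs.1 (hs.trans abs_one.symm) with rfl | rfl
  · exact hh m i
  · have := hh (m + Pi.single i (-1)) i
    rwa [add_assoc, ← Pi.single_add, neg_add_cancel, Pi.single_zero, add_zero, abs_sub_comm] at this

end Adjacency

section ShiftSpace

variable {d r : ℕ}

def stepSign (x : Site d → ZMod r) (i : Fin d) (p : Site d) : ℤ :=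
  if x (p + Pi.single i 1) - x p = 1 then 1 else -1

lemma abs_stepSign (x : Site d → ZMod r) (i : Fin d) (p : Site d) : |stepSign x i p| = 1 := by
  unfold stepSign; split_ifs <;> simp

lemma intCast_stepSign {x : Site d → ZMod r} (hx : x ∈ Xr d r) (i : Fin d) (p : Site d) :
    (stepSign x i p : ZMod r) = x (p + Pi.single i 1) - x p := by
  unfold stepSign
  split_ifs with h
  · simp [h]
  · simpa using ((hx _ _ (adjacent_add_single p i)).resolve_left h).symm

lemma stepSign_eq_one_of_dvd_two (h2 : r ∣ 2) {x : Site d → ZMod r} (hx : x ∈ Xr d r)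
    (i : Fin d) (p : Site d) : stepSign x i p = 1 := by
  have hneg : (-1 : ZMod r) = 1 := by
    rw [neg_eq_iff_add_eq_zero, one_add_one_eq_two]
    exact_mod_cast (ZMod.natCast_eq_zero_iff 2 r).2 h2
  rw [stepSign, if_pos]
  rcases hx _ _ (adjacent_add_single p i) with h | h
  · exact h
  · rw [h, hneg]

lemma eq_zero_of_intCast_eq_zero_of_not_dvd_four (hr : ¬ r ∣ 4) {v : ℤ} (hv : v = 0 ∨ v ∣ 4)
    (h : (v : ZMod r) = 0) : v = 0 :=
  hv.resolve_right fun h4 => hr (Int.natCast_dvd_natCast.1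
    (((ZMod.intCast_zmod_eq_zero_iff_dvd v r).1 h).trans h4))

lemma curlFree_stepSign (hr4 : r ≠ 4) {x : Site d → ZMod r} (hx : x ∈ Xr d r) :
    CurlFree (stepSign x) := by
  intro i j p
  by_cases h4 : r ∣ 4
  · have h2 : r ∣ 2 := by
      have := Nat.le_of_dvd (by norm_num) h4
      interval_cases r <;> simp_all
    simp [stepSign_eq_one_of_dvd_two h2 hx]
  · set v := stepSign x i (p + Pi.single j 1) - stepSign x i p
      - (stepSign x j (p + Pi.single i 1) - stepSign x j p)
    have hcast : (v : ZMod r) = 0 := by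
      push_cast [v, intCast_stepSign hx]
      rw [add_right_comm p]
      ring
    have hv : v = 0 ∨ v ∣ 4 := by
      have h1 := abs_stepSign x i (p + Pi.single j 1)
      have h2 := abs_stepSign x i p
      have h3 := abs_stepSign x j (p + Pi.single i 1)
      have h4 := abs_stepSign x j p
      simp only [abs_eq zero_le_one] at h1 h2 h3 h4
      have : v = -4 ∨ v = -2 ∨ v = 0 ∨ v = 2 ∨ v = 4 := by omega
      rcases this with h | h | h | h | h <;> simp [h]
    exact sub_eq_zero.1 (eq_zero_of_intCast_eq_zero_of_not_dvd_four h4 hv hcast)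

lemma intCast_mem_Xr {h : Site d → ℤ} (hh : IsHeightFn h) :
    (fun n => (h n : ZMod r)) ∈ Xr d r := by
  intro n m hnm
  rw [← Int.cast_sub]
  rcases (abs_eq zero_le_one).1 (hh n m hnm) with e | e
  · exact Or.inl (by rw [e, Int.cast_one])
  · exact Or.inr (by rw [e, Int.cast_neg, Int.cast_one])

lemma exists_isHeightFn_of_mem_Xr (hr4 : r ≠ 4) {x : Site d → ZMod r} (hx : x ∈ Xr d r) :
    ∃ h : Site d → ℤ, IsHeightFn h ∧ ∀ n, (h n : ZMod r) = x n := by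
  obtain ⟨c, hc⟩ := ZMod.intCast_surjective (x 0)
  refine ⟨fun n => c + potential (stepSign x) n,
    isHeightFn_of_abs_sub_add_single fun n i => ?_, fun n => ?_⟩
  · simp [(curlFree_stepSign hr4 hx).potential_add_single, abs_stepSign]
  · have hx_grad : ∀ p i, x (p + Pi.single i 1) = x p + (stepSign x i p : ZMod r) :=
      fun p i => by rw [intCast_stepSign hx, add_sub_cancel]
    have := map_potential (Int.castAddHom (ZMod r)) (stepSign x) n
    rw [Int.coe_castAddHom, potential_eq_sub_of_gradient hx_grad] at this
    simp [this, hc]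

end ShiftSpace

theorem Xr_eq_image_of_height_functions_general
    (d r : ℕ) (hr4 : r ≠ 4) :
    (∀ x : Site d → ZMod r,
      x ∈ Xr d r ↔ ∃ h : Site d → ℤ, IsHeightFn h ∧ ∀ n : Site d, ((h n : ZMod r)) = x n) ∧
    ((fun (h : Site d → ℤ) => (fun n : Site d => ((h n : ZMod r)))) ''
        {h : Site d → ℤ | IsHeightFn h}) = Xr d r := by
  have hiff : ∀ x : Site d → ZMod r,
      x ∈ Xr d r ↔ ∃ h : Site d → ℤ, IsHeightFn h ∧ ∀ n, (h n : ZMod r) = x n :=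
    fun x => ⟨exists_isHeightFn_of_mem_Xr hr4, fun ⟨_, hh, hx⟩ => funext hx ▸ intCast_mem_Xr hh⟩
  refine ⟨hiff, Set.ext fun x => ?_⟩
  simp [hiff, funext_iff]

/-- For `d ≥ 2` and `r ≥ 2`, `r ≠ 4`: a configuration
`x ∈ (ℤ/rℤ)^{ℤ^d}` satisfies `x_n - x_m = ±1 (mod r)` for adjacent sites iff it is the
mod-`r` reduction of a height function; consequently `X_r = φ_r(Ht)`. -/
theorem Xr_eq_image_of_height_functions
    (d r : ℕ) (hd : 2 ≤ d) (hr : 2 ≤ r) (hr4 : r ≠ 4) :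
    (∀ x : Site d → ZMod r,
      x ∈ Xr d r ↔ ∃ h : Site d → ℤ, IsHeightFn h ∧ ∀ n : Site d, ((h n : ZMod r)) = x n) ∧
    ((fun (h : Site d → ℤ) => (fun n : Site d => ((h n : ZMod r)))) ''
        {h : Site d → ℤ | IsHeightFn h}) = Xr d r :=
  Xr_eq_image_of_height_functions_general d r hr4
end

section
/- Fix d ≥ 2 and an integer r with r ∉ {1,2,4}. If x̂ and ŷ are height functions on ℤ^d with x̂_n ≡ ŷ_n (mod r) for all n ∈ ℤ^d, then there exists M ∈ ℤ such that x̂_n − ŷ_n = rM for all n ∈ ℤ^d. -/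
/-!
Along an edge each height function changes by `±1`, so the difference `x - y` of two height
functions changes by `-2`, `0` or `2`. If `r` divides `x - y` everywhere, it divides each such
change, and since `r ∤ 2` the change is `0`. Hence `x - y` is constant on the connected graph `ℤ^d`,
and its value is a multiple of `r`.
-/

open scoped BigOperators

open Function

lemma adjacent_update_add_one {d : ℕ} (n : Site d) (i : Fin d) :
    adjacent n (update n i (n i + 1)) := by
  unfold adjacent
  rw [Finset.sum_eq_single i (fun j _ hj => by simp [update_of_ne hj]) (by simp)]
  simp

section ConstantAlongEdges

variable {d : ℕ} {α : Type*} {f : Site d → α} (hf : ∀ n m, adjacent n m → f n = f m)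
include hf

lemma apply_update_add_eq_of_adjacent (n : Site d) (i : Fin d) (k : ℤ) :
    f (update n i (n i + k)) = f n := by
  induction k using Int.induction_on with
  | zero => simp
  | succ k ih =>
    set m := update n i (n i + k)
    have hm : update m i (m i + 1) = update n i (n i + (k + 1)) := by
      simp only [m, update_self, update_idem, add_assoc]
    rw [← hm, ← hf _ _ (adjacent_update_add_one m i), ih]
  | pred k ih =>
    set m := update n i (n i + (-k - 1))
    have hm : update m i (m i + 1) = update n i (n i + -k) := by
      simp only [m, update_self, update_idem]
      ring_nf
    rw [hf _ _ (adjacent_update_add_one m i), hm, ih]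

lemma apply_eq_apply_zero_of_adjacent (n : Site d) : f n = f 0 := by
  suffices h : ∀ s : Finset (Fin d), f (s.piecewise n 0) = f 0 by
    simpa using h Finset.univ
  intro s
  induction s using Finset.induction_on with
  | empty => simp
  | insert i s hi ih =>
    have hpi : (s.piecewise n 0) i = 0 := Finset.piecewise_eq_of_notMem _ _ _ hi
    rw [Finset.piecewise_insert, ← ih]
    simpa [hpi] using apply_update_add_eq_of_adjacent hf (s.piecewise n 0) i (n i)

end ConstantAlongEdges

lemma IsHeightFn.sub_sub_sub_mem {d : ℕ} {x y : Site d → ℤ} (hx : IsHeightFn x)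
    (hy : IsHeightFn y) {n m : Site d} (h : adjacent n m) :
    (x n - y n) - (x m - y m) ∈ ({-2, 0, 2} : Set ℤ) := by
  have hxnm := hx n m h
  have hynm := hy n m h
  rw [abs_eq zero_le_one] at hxnm hynm
  simp only [Set.mem_insert_iff, Set.mem_singleton_iff]
  omega

lemma IsHeightFn.sub_eq_of_adjacent {d : ℕ} {r : ℤ} (hr : ¬ r ∣ 2) {x y : Site d → ℤ}
    (hx : IsHeightFn x) (hy : IsHeightFn y) (hdvd : ∀ n, r ∣ x n - y n) {n m : Site d}
    (h : adjacent n m) : x n - y n = x m - y m := by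
  have hdvd_sub : r ∣ (x n - y n) - (x m - y m) := dvd_sub (hdvd n) (hdvd m)
  rcases hx.sub_sub_sub_mem hy h with h2 | h0 | h2
  · exact absurd (dvd_neg.mpr (h2 ▸ hdvd_sub)) hr
  · exact sub_eq_zero.mp h0
  · exact absurd (h2 ▸ hdvd_sub) hr

theorem height_lifts_differ_by_constant_multiple_general
    (d r : ℕ) (hr1 : r ≠ 1) (hr2 : r ≠ 2)
    (x y : Site d → ℤ) (hx : IsHeightFn x) (hy : IsHeightFn y)
    (hcong : ∀ n : Site d, ((x n : ZMod r)) = ((y n : ZMod r))) :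
    ∃ M : ℤ, ∀ n : Site d, x n - y n = r * M := by
  have hr : ¬ (r : ℤ) ∣ 2 := by
    have : ¬ r ∣ 2 := by rw [Nat.dvd_prime Nat.prime_two]; tauto
    exact_mod_cast this
  have hdvd (n : Site d) : (r : ℤ) ∣ x n - y n :=
    (ZMod.intCast_eq_intCast_iff_dvd_sub (y n) (x n) r).mp (hcong n).symm
  obtain ⟨M, hM⟩ := hdvd 0
  exact ⟨M, fun n => hM ▸ apply_eq_apply_zero_of_adjacent (fun _ _ => hx.sub_eq_of_adjacent hr hy hdvd) n⟩

/-- For `d ≥ 2` and a positive integer `r ∉ {1,2,4}`: two height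
functions on `ℤ^d` which are congruent mod `r` at every site differ by a constant
integer multiple of `r`. -/
theorem height_lifts_differ_by_constant_multiple
    (d r : ℕ) (hd : 2 ≤ d) (hr0 : 0 < r) (hr1 : r ≠ 1) (hr2 : r ≠ 2) (hr4 : r ≠ 4)
    (x y : Site d → ℤ) (hx : IsHeightFn x) (hy : IsHeightFn y)
    (hcong : ∀ n : Site d, ((x n : ZMod r)) = ((y n : ZMod r))) :
    ∃ M : ℤ, ∀ n : Site d, x n - y n = r * M :=
  height_lifts_differ_by_constant_multiple_general d r hr1 hr2 x y hx hy hcong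
end

section
/- Fix d ≥ 2 and an integer r with r ∉ {1,2,4}, and let X_r ⊆ (ℤ/rℤ)^{ℤ^d} be the set of configurations x with x_n − x_m = ±1 (mod r) whenever ‖n−m‖₁ = 1. Let F ⊆ ℤ^d be finite and x,y,z,w ∈ X_r satisfy x|_{F^c} = y|_{F^c}, z|_{F^c} = w|_{F^c}, x|_{F∪∂F} = z|_{F∪∂F}, and y|_{F∪∂F} = w|_{F∪∂F}. If (x̂,ŷ) and (ẑ,ŵ) are pairs of height functions, each pair agreeing at all but finitely many sites, with x̂ ≡ x, ŷ ≡ y, ẑ ≡ z, ŵ ≡ w (mod r) pointwise, then x̂_n − ŷ_n = ẑ_n − ŵ_n for all n ∈ ℤ^d. -/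
open scoped BigOperators

/-- `h` is a height-function lift of the configuration `x ∈ (ℤ/rℤ)^{ℤ^d}`. -/
def LiftsTo {d r : ℕ} (h : Site d → ℤ) (x : Site d → ZMod r) : Prop :=
  IsHeightFn h ∧ ∀ n : Site d, ((h n : ZMod r)) = x n

/-! The double difference `D = (x̂ - ŷ) - (ẑ - ŵ)` reduces mod `r` to `(x - y) - (z - w)`, which
vanishes on `F` (where `x = z`, `y = w`) and off `F` (where `x = y`, `z = w`). Across an edge `D`
changes by an even integer of size at most `4` that is divisible by `r`, hence not at all when
`r ∉ {1, 2, 4}`. So `D` is constant on the connected lattice, and it is `0` far away, where both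
pairs of lifts agree. -/

lemma eq_zero_of_dvd_of_even_of_abs_le_four {r : ℕ} (hr1 : r ≠ 1) (hr2 : r ≠ 2) (hr4 : r ≠ 4)
    {k : ℤ} (hdvd : (r : ℤ) ∣ k) (heven : Even k) (hk : |k| ≤ 4) : k = 0 := by
  obtain ⟨j, hj⟩ := heven
  rw [abs_le] at hk
  rcases Nat.lt_or_ge r 5 with hr | hr
  · interval_cases r <;> omega
  · exact Int.eq_zero_of_abs_lt_dvd hdvd (by rw [abs_lt]; omega)

lemma exists_adjacent_natAbs_sum_lt {d : ℕ} {n m : Site d} (hnm : n ≠ m) :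
    ∃ n' : Site d, adjacent n n' ∧
      ∑ j, (n' j - m j).natAbs < ∑ j, (n j - m j).natAbs := by
  obtain ⟨i, hi⟩ := Function.ne_iff.mp hnm
  let s : ℤ := if n i < m i then 1 else -1
  refine ⟨Function.update n i (n i + s), ?_, ?_⟩
  · unfold adjacent
    rw [Finset.sum_eq_single i (fun j _ hj => by simp [Function.update_of_ne hj]) (by simp)]
    simp only [Function.update_self, s]
    split_ifs <;> norm_num
  · refine Finset.sum_lt_sum (fun j _ => ?_) ⟨i, Finset.mem_univ i, ?_⟩
    · rcases eq_or_ne j i with rfl | hj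
      · simp only [Function.update_self, s]
        split_ifs <;> omega
      · rw [Function.update_of_ne hj]
    · simp only [Function.update_self, s]
      split_ifs <;> omega

lemma eq_of_forall_adjacent_eq {d : ℕ} {α : Type*} {ψ : Site d → α}
    (h : ∀ n m, adjacent n m → ψ n = ψ m) (n m : Site d) : ψ n = ψ m := by
  induction hk : ∑ j, (n j - m j).natAbs using Nat.strong_induction_on generalizing n with
  | _ k ih =>
    by_cases hnm : n = m
    · rw [hnm]
    obtain ⟨n', hadj, hlt⟩ := exists_adjacent_natAbs_sum_lt hnm
    rw [h n n' hadj]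
    exact ih _ (hk ▸ hlt) n' rfl

lemma IsHeightFn.sub_eq_one_or_neg_one {d : ℕ} {h : Site d → ℤ} (hh : IsHeightFn h)
    {n m : Site d} (hnm : adjacent n m) : h n - h m = 1 ∨ h n - h m = -1 :=
  abs_eq zero_le_one |>.mp (hh n m hnm)

/-- Across an edge each of the four heights moves by `±1`, so the double difference moves by an
even integer of size at most `4`. -/
lemma IsHeightFn.sub_sub_sub_eq_of_adjacent {d r : ℕ} (hr1 : r ≠ 1) (hr2 : r ≠ 2) (hr4 : r ≠ 4)
    {a b c e : Site d → ℤ} (ha : IsHeightFn a) (hb : IsHeightFn b) (hc : IsHeightFn c)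
    (he : IsHeightFn e) {n m : Site d} (hnm : adjacent n m)
    (hdvd : (r : ℤ) ∣ (a n - b n - (c n - e n)) - (a m - b m - (c m - e m))) :
    a n - b n - (c n - e n) = a m - b m - (c m - e m) := by
  suffices (a n - b n - (c n - e n)) - (a m - b m - (c m - e m)) = 0 by omega
  refine eq_zero_of_dvd_of_even_of_abs_le_four hr1 hr2 hr4 hdvd ?_ ?_ <;>
  rcases ha.sub_eq_one_or_neg_one hnm with h₁ | h₁ <;>
  rcases hb.sub_eq_one_or_neg_one hnm with h₂ | h₂ <;>
  rcases hc.sub_eq_one_or_neg_one hnm with h₃ | h₃ <;>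
  rcases he.sub_eq_one_or_neg_one hnm with h₄ | h₄ <;>
  first
  | exact ⟨(a n - a m - (b n - b m) - (c n - c m) + (e n - e m)) / 2, by omega⟩
  | (rw [abs_le]; omega)

lemma dvd_sub_sub_sub_of_liftsTo {d r : ℕ} {x y z w : Site d → ZMod r} {a b c e : Site d → ℤ}
    (ha : LiftsTo a x) (hb : LiftsTo b y) (hc : LiftsTo c z) (he : LiftsTo e w) {n : Site d}
    (hn : x n - y n = z n - w n) : (r : ℤ) ∣ a n - b n - (c n - e n) := by
  rw [← ZMod.intCast_zmod_eq_zero_iff_dvd]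
  push_cast
  rw [ha.2, hb.2, hc.2, he.2, hn, sub_self]

theorem height_diff_markovian_general
    (d r : ℕ) (hd : 2 ≤ d) (hr1 : r ≠ 1) (hr2 : r ≠ 2) (hr4 : r ≠ 4)
    (F : Set (Site d))
    (x y z w : Site d → ZMod r)
    (hxy : ∀ n ∉ F, x n = y n) (hzw : ∀ n ∉ F, z n = w n)
    (hxz : ∀ n ∈ F ∪ siteBdry F, x n = z n) (hyw : ∀ n ∈ F ∪ siteBdry F, y n = w n)
    (hx' hy' hz' hw' : Site d → ℤ)
    (hlx : LiftsTo hx' x) (hly : LiftsTo hy' y) (hlz : LiftsTo hz' z) (hlw : LiftsTo hw' w)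
    (hfin1 : {n : Site d | hx' n ≠ hy' n}.Finite)
    (hfin2 : {n : Site d | hz' n ≠ hw' n}.Finite) :
    ∀ n : Site d, hx' n - hy' n = hz' n - hw' n := by
  have hdvd : ∀ n, (r : ℤ) ∣ hx' n - hy' n - (hz' n - hw' n) := by
    intro n
    refine dvd_sub_sub_sub_of_liftsTo hlx hly hlz hlw ?_
    by_cases hn : n ∈ F
    · rw [hxz n (Or.inl hn), hyw n (Or.inl hn)]
    · rw [hxy n hn, hzw n hn, sub_self, sub_self]
  have hconst : ∀ n m, hx' n - hy' n - (hz' n - hw' n) = hx' m - hy' m - (hz' m - hw' m) :=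
    eq_of_forall_adjacent_eq fun n m hnm =>
      hlx.1.sub_sub_sub_eq_of_adjacent hr1 hr2 hr4 hly.1 hlz.1 hlw.1 hnm
        (dvd_sub (hdvd n) (hdvd m))
  have : Nonempty (Fin d) := ⟨⟨0, by omega⟩⟩
  obtain ⟨n₀, hn₀⟩ := (hfin1.union hfin2).infinite_compl.nonempty
  simp only [Set.mem_compl_iff, Set.mem_union, Set.mem_ofPred_eq, not_or, not_not] at hn₀
  intro n
  have := hconst n n₀
  omega

/-- For `d ≥ 2`, `r ∉ {1,2,4}`: if `x,y,z,w ∈ X_r` satisfy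
`x = y` and `z = w` off a finite set `F`, while `x = z` and `y = w` on `F ∪ ∂F`, then
the differences of homoclinic height-function lifts of `(x,y)` and of `(z,w)` coincide
at every site. -/
theorem height_diff_markovian
    (d r : ℕ) (hd : 2 ≤ d) (hr0 : 0 < r) (hr1 : r ≠ 1) (hr2 : r ≠ 2) (hr4 : r ≠ 4)
    (F : Set (Site d)) (hF : F.Finite)
    (x y z w : Site d → ZMod r)
    (hx : x ∈ Xr d r) (hy : y ∈ Xr d r) (hz : z ∈ Xr d r) (hw : w ∈ Xr d r)
    (hxy : ∀ n ∉ F, x n = y n) (hzw : ∀ n ∉ F, z n = w n)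
    (hxz : ∀ n ∈ F ∪ siteBdry F, x n = z n) (hyw : ∀ n ∈ F ∪ siteBdry F, y n = w n)
    (hx' hy' hz' hw' : Site d → ℤ)
    (hlx : LiftsTo hx' x) (hly : LiftsTo hy' y) (hlz : LiftsTo hz' z) (hlw : LiftsTo hw' w)
    (hfin1 : {n : Site d | hx' n ≠ hy' n}.Finite)
    (hfin2 : {n : Site d | hz' n ≠ hw' n}.Finite) :
    ∀ n : Site d, hx' n - hy' n = hz' n - hw' n :=
  height_diff_markovian_general d r hd hr1 hr2 hr4 F x y z w hxy hzw hxz hyw hx' hy' hz' hw' hlx hly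
    hlz hlw hfin1 hfin2
end

section
/- Fix d ≥ 2 and an integer r with r ∉ {1,2,4}. There exists a shift-invariant Markov cocycle on X_r which is the Gibbs cocycle of some nearest neighbor interaction but is not the Gibbs cocycle of any shift-invariant nearest neighbor interaction; that is, G^σ_{X_r} ≠ G_{X_r} ∩ M^σ_{X_r}. -/
open scoped BigOperators

/-- `N_i(a,b)`: the net number of crossings from `i + rℤ` to `i + 2 + rℤ` of a path from
`a` to `b` in steps of size `2`. -/
noncomputable def NiCount (r : ℕ) (i : ℤ) (a b : ℤ) : ℤ :=
  if a ≤ b then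
    (((Finset.Ico a b).filter fun m => (m - a) % 2 = 0 ∧ (m - i) % (r : ℤ) = 0).card : ℤ)
  else
    -(((Finset.Ico b a).filter fun m => (m - b) % 2 = 0 ∧ (m - i) % (r : ℤ) = 0).card : ℤ)

/-- The standard generator `e_j` of `ℤ^d`. -/
def unitVec {d : ℕ} (j : Fin d) : Site d := Pi.single j 1

/-- The Gibbs cocycle `M_φ(x,y)` of a (not necessarily shift-invariant) nearest neighbor
interaction `φ`, given by vertex weights `fv n a` (at site `n`) and edge weights
`fe n j a b` (on the edge `(n, n + e_j)` with values `a` at `n` and `b` at `n + e_j`). -/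
noncomputable def gibbsDiff {d r : ℕ} (fv : Site d → ZMod r → ℝ)
    (fe : Site d → Fin d → ZMod r → ZMod r → ℝ)
    (x y : Site d → ZMod r) : ℝ :=
  (∑ᶠ n : Site d, (fv n (y n) - fv n (x n))) +
  ∑ᶠ n : Site d, ∑ j : Fin d,
    (fe n j (y n) (y (n + unitVec j)) - fe n j (x n) (x (n + unitVec j)))

/-!
The cocycle is the Gibbs cocycle of the edge interaction `n_{j₀} · slope (x n) (x (n + e_{j₀}))`,
where `slope ∈ {±1}` lifts the step `x (n + e_{j₀}) - x n`. Because `r ∉ {1, 2, 4}`, the slopes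
around every unit square add up to zero, so for homoclinic `x, y ∈ X_r` the total change of slope
`∑ₙ slopeDiff j x y n` in each direction vanishes (sum the plaquette identity by parts against
the coordinate of a second direction, which needs `d ≥ 2`). This makes the cocycle
shift-invariant. On the other hand, averaged over the rotations `x ↦ x + a` of the alphabet, the
Gibbs cocycle of a shift-invariant interaction only sees these totals and so vanishes, whereas
our cocycle is rotation-invariant and equals `-2` on the checkerboard configuration and its
modification raising the origin from `0` to `2`.
-/

namespace TiltedGibbs

open Function

variable {d r : ℕ}

@[simp]
lemma unitVec_apply_self (j : Fin d) : unitVec (d := d) j j = 1 := Pi.single_eq_same j 1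

@[simp]
lemma unitVec_apply_of_ne {i j : Fin d} (h : i ≠ j) : unitVec (d := d) j i = 0 :=
  Pi.single_eq_of_ne h 1

lemma unitVec_ne_zero (j : Fin d) : unitVec (d := d) j ≠ 0 :=
  fun h => one_ne_zero ((unitVec_apply_self j).symm.trans (congrFun h j))

lemma adjacent_comm {n m : Site d} : adjacent n m ↔ adjacent m n := by
  simp only [adjacent, abs_sub_comm]

lemma adjacent_add_unitVec (n : Site d) (j : Fin d) : adjacent n (n + unitVec j) := by
  simp [adjacent, unitVec, Pi.single_apply, apply_ite]

lemma sum_sub_sum_eq_one_or_neg_one_of_adjacent {n m : Site d} (h : adjacent n m) :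
    ∑ i, n i - ∑ i, m i = 1 ∨ ∑ i, n i - ∑ i, m i = -1 := by
  rw [← Finset.sum_sub_distrib]
  have hle : |∑ i, (n i - m i)| ≤ 1 := h ▸ Finset.abs_sum_le_sum_abs _ _
  have hparity : Even (∑ i, (|n i - m i| - (n i - m i))) :=
    Finset.even_sum _ fun i _ => by
      rcases abs_choice (n i - m i) with h | h <;> rw [h]
      · simp
      · exact ⟨m i - n i, by ring⟩
  rw [Finset.sum_sub_distrib, show ∑ i, |n i - m i| = 1 from h] at hparity
  obtain ⟨t, ht⟩ := hparity
  rw [abs_le] at hle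
  omega

lemma mem_union_siteBdry_of_adjacent {F : Set (Site d)} {n m : Site d} (hn : n ∈ F)
    (h : adjacent n m) : m ∈ F ∪ siteBdry F := by
  by_cases hm : m ∈ F
  · exact Or.inl hm
  · exact Or.inr ⟨hm, n, hn, h⟩

lemma hasFiniteSupport_of_eq_zero {A M : Type*} [Zero M] {x y : Site d → A}
    (hxy : {n | x n ≠ y n}.Finite) {F : Site d → M}
    (hF : ∀ n, x n = y n → (∀ j, x (n + unitVec j) = y (n + unitVec j)) → F n = 0) :
    F.HasFiniteSupport := by
  refine (hxy.union (Set.finite_iUnion fun j =>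
    hxy.preimage (add_left_injective (unitVec j)).injOn)).subset fun n hn => ?_
  by_contra hout
  simp only [Set.mem_union, Set.mem_ofPred_eq, Set.mem_iUnion, Set.mem_preimage, not_or,
    not_exists, not_not] at hout
  exact hn (hF n hout.1 hout.2)

section GibbsCocycle

variable (fv : Site d → ZMod r → ℝ) (fe : Site d → Fin d → ZMod r → ZMod r → ℝ)

lemma gibbsDiff_add {x y z : Site d → ZMod r} (hxy : {n | x n ≠ y n}.Finite)
    (hyz : {n | y n ≠ z n}.Finite) :
    gibbsDiff fv fe x z = gibbsDiff fv fe x y + gibbsDiff fv fe y z := by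
  have hvertex : ∀ {x y : Site d → ZMod r}, {n | x n ≠ y n}.Finite →
      HasFiniteSupport fun n => fv n (y n) - fv n (x n) := fun h =>
    hasFiniteSupport_of_eq_zero h fun n hn _ => by rw [hn, sub_self]
  have hedge : ∀ {x y : Site d → ZMod r}, {n | x n ≠ y n}.Finite →
      HasFiniteSupport fun n => ∑ j, (fe n j (y n) (y (n + unitVec j))
        - fe n j (x n) (x (n + unitVec j))) := fun h =>
    hasFiniteSupport_of_eq_zero h fun n hn hnj =>
      Finset.sum_eq_zero fun j _ => by rw [hn, hnj, sub_self]
  simp only [gibbsDiff]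
  rw [add_add_add_comm, ← finsum_add_distrib (hvertex hxy) (hvertex hyz),
    ← finsum_add_distrib (hedge hxy) (hedge hyz)]
  congr 1 <;> refine finsum_congr fun n => ?_
  · ring
  · rw [← Finset.sum_add_distrib]
    exact Finset.sum_congr rfl fun j _ => by ring

lemma isCocycle_gibbsDiff (X : Set (Site d → ZMod r)) :
    IsCocycle X fun p => gibbsDiff fv fe p.val.1 p.val.2 :=
  fun _ _ _ hxy hyz _ => gibbsDiff_add fv fe hxy.2.2 hyz.2.2

lemma isMarkovProp_gibbsDiff (X : Set (Site d → ZMod r)) :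
    IsMarkovProp X fun p => gibbsDiff fv fe p.val.1 p.val.2 := by
  intro x y x' y' _ _ F _ hxy hxy' hx hy
  simp only [gibbsDiff]
  congr 1 <;> refine finsum_congr fun n => ?_
  · by_cases hn : n ∈ F
    · rw [hx n (Or.inl hn), hy n (Or.inl hn)]
    · rw [hxy n hn, hxy' n hn, sub_self, sub_self]
  · refine Finset.sum_congr rfl fun j _ => ?_
    by_cases hF : n ∈ F ∨ n + unitVec j ∈ F
    · have hclosure : n ∈ F ∪ siteBdry F ∧ n + unitVec j ∈ F ∪ siteBdry F := by
        rcases hF with hF | hF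
        · exact ⟨Or.inl hF, mem_union_siteBdry_of_adjacent hF (adjacent_add_unitVec n j)⟩
        · exact ⟨mem_union_siteBdry_of_adjacent hF (adjacent_comm.1 (adjacent_add_unitVec n j)),
            Or.inl hF⟩
      rw [hx _ hclosure.1, hx _ hclosure.2, hy _ hclosure.1, hy _ hclosure.2]
    · rw [not_or] at hF
      rw [hxy _ hF.1, hxy _ hF.2, hxy' _ hF.1, hxy' _ hF.2, sub_self, sub_self]

end GibbsCocycle

section Slope

/-- The lift `±1 ∈ ℤ` of a step `b - a = ±1` in `ZMod r` (junk value `-1` for any other step). -/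
def slope (a b : ZMod r) : ℤ := if b - a = 1 then 1 else -1

lemma slope_eq_one_or_neg_one (a b : ZMod r) : slope a b = 1 ∨ slope a b = -1 := by
  unfold slope; split_ifs <;> simp

lemma slope_of_sub_eq_one {a b : ZMod r} (h : b - a = 1) : slope a b = 1 := if_pos h

lemma slope_of_sub_eq_neg_one (hr : 3 ≤ r) {a b : ZMod r} (h : b - a = -1) : slope a b = -1 :=
  have : Fact (2 < r) := ⟨hr⟩
  if_neg (h ▸ ZMod.neg_one_ne_one)

lemma slope_add_add (a b c : ZMod r) : slope (a + c) (b + c) = slope a b := by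
  simp only [slope, add_sub_add_right_eq_sub]

lemma intCast_slope (hr : 3 ≤ r) {a b : ZMod r} (h : b - a = 1 ∨ b - a = -1) :
    (slope a b : ZMod r) = b - a := by
  rcases h with h | h
  · rw [slope_of_sub_eq_one h, h, Int.cast_one]
  · rw [slope_of_sub_eq_neg_one hr h, h, Int.cast_neg, Int.cast_one]

lemma sub_eq_one_or_neg_one_of_mem_Xr {x : Site d → ZMod r} (hx : x ∈ Xr d r) (n : Site d)
    (j : Fin d) : x (n + unitVec j) - x n = 1 ∨ x (n + unitVec j) - x n = -1 :=
  hx _ _ (adjacent_comm.1 (adjacent_add_unitVec n j))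

def edgeSlope (j : Fin d) (x : Site d → ZMod r) (n : Site d) : ℤ :=
  slope (x n) (x (n + unitVec j))

/-- The difference of the two sides is a multiple of `r` in `{0, ±2, ±4}`. -/
lemma add_eq_add_of_intCast_eq (hr3 : 3 ≤ r) (hr4 : r ≠ 4) {s₁ s₂ s₃ s₄ : ℤ}
    (h₁ : s₁ = 1 ∨ s₁ = -1) (h₂ : s₂ = 1 ∨ s₂ = -1) (h₃ : s₃ = 1 ∨ s₃ = -1)
    (h₄ : s₄ = 1 ∨ s₄ = -1) (h : ((s₁ + s₂ : ℤ) : ZMod r) = ((s₃ + s₄ : ℤ) : ZMod r)) :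
    s₁ + s₂ = s₃ + s₄ := by
  have hdvd := (ZMod.intCast_eq_intCast_iff_dvd_sub _ _ r).1 h
  by_contra hne
  have hle : (r : ℤ) ≤ |s₃ + s₄ - (s₁ + s₂)| :=
    Int.le_of_dvd (abs_pos.2 (sub_ne_zero.2 (Ne.symm hne))) ((dvd_abs _ _).2 hdvd)
  have habs : |s₃ + s₄ - (s₁ + s₂)| ≤ 4 := abs_le.2 ⟨by omega, by omega⟩
  obtain rfl : r = 3 := by omega
  omega

lemma edgeSlope_plaquette (hr3 : 3 ≤ r) (hr4 : r ≠ 4) {x : Site d → ZMod r} (hx : x ∈ Xr d r)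
    (n : Site d) (j k : Fin d) :
    edgeSlope j x n + edgeSlope k x (n + unitVec j)
      = edgeSlope k x n + edgeSlope j x (n + unitVec k) := by
  refine add_eq_add_of_intCast_eq hr3 hr4 (slope_eq_one_or_neg_one _ _)
    (slope_eq_one_or_neg_one _ _) (slope_eq_one_or_neg_one _ _) (slope_eq_one_or_neg_one _ _) ?_
  have hstep := sub_eq_one_or_neg_one_of_mem_Xr hx
  simp only [edgeSlope]
  push_cast
  rw [intCast_slope hr3 (hstep n j), intCast_slope hr3 (hstep (n + unitVec j) k),
    intCast_slope hr3 (hstep n k), intCast_slope hr3 (hstep (n + unitVec k) j),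
    add_right_comm n (unitVec k)]
  ring

noncomputable def slopeDiff (j : Fin d) (x y : Site d → ZMod r) (n : Site d) : ℝ :=
  edgeSlope j y n - edgeSlope j x n

lemma hasFiniteSupport_slopeDiff {x y : Site d → ZMod r} (hxy : {n | x n ≠ y n}.Finite)
    (j : Fin d) : (slopeDiff j x y).HasFiniteSupport :=
  hasFiniteSupport_of_eq_zero hxy fun n hn hnj => by
    rw [slopeDiff, edgeSlope, edgeSlope, hn, hnj, sub_self]

lemma slopeDiff_plaquette (hr3 : 3 ≤ r) (hr4 : r ≠ 4) {x y : Site d → ZMod r}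
    (hx : x ∈ Xr d r) (hy : y ∈ Xr d r) (n : Site d) (j k : Fin d) :
    slopeDiff j x y (n + unitVec k) - slopeDiff j x y n
      = slopeDiff k x y (n + unitVec j) - slopeDiff k x y n := by
  have h := congrArg (Int.cast : ℤ → ℝ) <| congrArg₂ (· - ·)
    (edgeSlope_plaquette hr3 hr4 hy n j k) (edgeSlope_plaquette hr3 hr4 hx n j k)
  push_cast at h
  simp only [slopeDiff]
  linarith

lemma finsum_mul_sub_comp_add {G : Type*} [AddCommGroup G] (w F : G → ℝ)
    (hF : F.HasFiniteSupport) (v : G) :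
    ∑ᶠ n, w n * (F (n + v) - F n) = ∑ᶠ n, (w (n - v) - w n) * F n := by
  have hshift : (fun n => F (n + v)).HasFiniteSupport :=
    hF.fun_comp_of_injective (add_left_injective v)
  simp only [mul_sub, sub_mul]
  rw [finsum_sub_distrib (hshift.fun_mul_right w) (hF.fun_mul_right w),
    finsum_sub_distrib (hF.fun_mul_right _) (hF.fun_mul_right w)]
  congr 1
  simpa using finsum_comp_equiv (Equiv.addRight v) (f := fun n => w (n - v) * F n)

/-- The slopes of `x` and `y` in each direction have the same total: weighting the plaquette
identity by the `k`-th coordinate and summing by parts turns its left side into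
`-∑ slopeDiff j` and its right side into `0`. -/
theorem finsum_slopeDiff_eq_zero (hr3 : 3 ≤ r) (hr4 : r ≠ 4) (hd : 2 ≤ d)
    {x y : Site d → ZMod r} (hx : x ∈ Xr d r) (hy : y ∈ Xr d r)
    (hxy : {n | x n ≠ y n}.Finite) (j : Fin d) : ∑ᶠ n, slopeDiff j x y n = 0 := by
  have : Nontrivial (Fin d) := Fin.nontrivial_iff_two_le.2 hd
  obtain ⟨k, hkj⟩ := exists_ne j
  let w : Site d → ℝ := fun n => n k
  calc ∑ᶠ n, slopeDiff j x y n
      = -∑ᶠ n, (w (n - unitVec k) - w n) * slopeDiff j x y n := by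
        simp [w, ← finsum_neg_distrib]
    _ = -∑ᶠ n, w n * (slopeDiff k x y (n + unitVec j) - slopeDiff k x y n) := by
        rw [← finsum_mul_sub_comp_add _ _ (hasFiniteSupport_slopeDiff hxy j)]
        simp only [slopeDiff_plaquette hr3 hr4 hx hy]
    _ = 0 := by
        rw [finsum_mul_sub_comp_add _ _ (hasFiniteSupport_slopeDiff hxy k)]
        simp [w, unitVec_apply_of_ne hkj]

end Slope

section Tilted

/-- The edge interaction `(a, b) ↦ n_{j₀} · slope a b` on the edges `(n, n + e_{j₀})`: it is not
shift-invariant, but its Gibbs cocycle is. -/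
noncomputable def tiltedSlope (j₀ : Fin d) : Site d → Fin d → ZMod r → ZMod r → ℝ :=
  fun n j a b => if j = j₀ then (n j₀ : ℝ) * slope a b else 0

lemma gibbsDiff_tiltedSlope (j₀ : Fin d) (x y : Site d → ZMod r) :
    gibbsDiff 0 (tiltedSlope j₀) x y = ∑ᶠ n, (n j₀ : ℝ) * slopeDiff j₀ x y n := by
  simp [gibbsDiff, tiltedSlope, slopeDiff, edgeSlope, mul_sub]

lemma gibbsDiff_tiltedSlope_add_const (j₀ : Fin d) (x y : Site d → ZMod r) (a : ZMod r) :
    gibbsDiff 0 (tiltedSlope j₀) (fun n => x n + a) (fun n => y n + a)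
      = gibbsDiff 0 (tiltedSlope j₀) x y := by
  simp only [gibbsDiff_tiltedSlope, slopeDiff, edgeSlope, slope_add_add]

/-- A shift by `v` changes the cocycle by `v_{j₀} · ∑ slopeDiff j₀`, which vanishes. -/
theorem isShiftInvCocycle_tiltedSlope (hr3 : 3 ≤ r) (hr4 : r ≠ 4) (hd : 2 ≤ d) (j₀ : Fin d) :
    IsShiftInvCocycle (Xr d r) fun p => gibbsDiff 0 (tiltedSlope j₀) p.val.1 p.val.2 := by
  rintro v x y ⟨hx, hy, hxy⟩ -
  have hfin := hasFiniteSupport_slopeDiff hxy j₀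
  have hshift : ∀ n, slopeDiff j₀ (shift v x) (shift v y) n = slopeDiff j₀ x y (n + v) :=
    fun n => by simp only [slopeDiff, edgeSlope, shift, add_right_comm n v]
  show gibbsDiff 0 (tiltedSlope j₀) (shift v x) (shift v y) = gibbsDiff 0 (tiltedSlope j₀) x y
  calc gibbsDiff 0 (tiltedSlope j₀) (shift v x) (shift v y)
      = ∑ᶠ n, ((n - v) j₀ : ℝ) * slopeDiff j₀ x y n := by
        rw [gibbsDiff_tiltedSlope, finsum_congr fun n => by rw [hshift]]
        simpa using finsum_comp_equiv (Equiv.addRight v)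
          (f := fun n => ((n - v) j₀ : ℝ) * slopeDiff j₀ x y n)
    _ = ∑ᶠ n, (n j₀ : ℝ) * slopeDiff j₀ x y n - v j₀ * ∑ᶠ n, slopeDiff j₀ x y n := by
        simp only [Pi.sub_apply, Int.cast_sub, sub_mul]
        rw [finsum_sub_distrib (hfin.fun_mul_right _) (hfin.fun_mul_right _), mul_finsum]
    _ = gibbsDiff 0 (tiltedSlope j₀) x y := by
        rw [finsum_slopeDiff_eq_zero hr3 hr4 hd hx hy hxy, mul_zero, sub_zero,
          gibbsDiff_tiltedSlope]

end Tilted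

section RotationAverage

variable [NeZero r]

noncomputable def slopeCoeff (g : ZMod r → ZMod r → ℝ) : ℝ :=
  (∑ a, g a (a + 1) - ∑ a, g a (a - 1)) / 2

lemma sum_comp_add_const (hr : 3 ≤ r) (g : ZMod r → ZMod r → ℝ) {b c : ZMod r}
    (hbc : c - b = 1 ∨ c - b = -1) :
    ∑ a, g (b + a) (c + a)
      = (∑ a, g a (a + 1) + ∑ a, g a (a - 1)) / 2 + slopeCoeff g * slope b c := by
  have hrotate : ∑ a, g (b + a) (c + a) = ∑ a, g a (a + (c - b)) := by
    refine Fintype.sum_equiv (Equiv.addLeft b) _ _ fun a => ?_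
    simp only [Equiv.coe_addLeft]
    congr 1
    abel
  rw [hrotate, slopeCoeff]
  rcases hbc with h | h
  · rw [h, slope_of_sub_eq_one h]; push_cast; ring
  · rw [h, slope_of_sub_eq_neg_one hr h]; push_cast; ring_nf

/-- Averaged over the rotations `x ↦ x + a` of the alphabet, the Gibbs cocycle of a
shift-invariant interaction only sees `∑ slopeDiff j`, which vanishes. -/
theorem sum_gibbsDiff_add_const_eq_zero (hr3 : 3 ≤ r) (hr4 : r ≠ 4) (hd : 2 ≤ d)
    (f : ZMod r → ℝ) (g : Fin d → ZMod r → ZMod r → ℝ) {x y : Site d → ZMod r}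
    (hx : x ∈ Xr d r) (hy : y ∈ Xr d r) (hxy : {n | x n ≠ y n}.Finite) :
    ∑ a, gibbsDiff (fun _ => f) (fun _ => g) (fun n => x n + a) (fun n => y n + a) = 0 := by
  have hvertex : ∀ n, ∑ a, (f (y n + a) - f (x n + a)) = 0 := fun n => by
    rw [Finset.sum_sub_distrib,
      Fintype.sum_equiv (Equiv.addLeft (y n)) (fun a => f (y n + a)) f fun _ => rfl,
      Fintype.sum_equiv (Equiv.addLeft (x n)) (fun a => f (x n + a)) f fun _ => rfl, sub_self]
  have hedge : ∀ n, ∑ a, ∑ j, (g j (y n + a) (y (n + unitVec j) + a)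
      - g j (x n + a) (x (n + unitVec j) + a)) = ∑ j, slopeCoeff (g j) * slopeDiff j x y n :=
    fun n => by
      rw [Finset.sum_comm]
      refine Finset.sum_congr rfl fun j _ => ?_
      rw [Finset.sum_sub_distrib,
        sum_comp_add_const hr3 _ (sub_eq_one_or_neg_one_of_mem_Xr hy n j),
        sum_comp_add_const hr3 _ (sub_eq_one_or_neg_one_of_mem_Xr hx n j), slopeDiff]
      simp only [edgeSlope]
      ring
  simp only [gibbsDiff]
  rw [Finset.sum_add_distrib,
    ← finsum_sum_comm _ _ fun a _ => hasFiniteSupport_of_eq_zero hxy fun n hn _ => by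
      rw [hn, sub_self],
    ← finsum_sum_comm _ _ fun a _ => hasFiniteSupport_of_eq_zero hxy fun n hn hnj =>
      Finset.sum_eq_zero fun j _ => by rw [hn, hnj, sub_self]]
  simp only [hvertex, hedge, finsum_zero, zero_add]
  rw [finsum_sum_comm _ _ fun j _ => (hasFiniteSupport_slopeDiff hxy j).fun_mul_right _]
  exact Finset.sum_eq_zero fun j _ => by
    rw [← mul_finsum, finsum_slopeDiff_eq_zero hr3 hr4 hd hx hy hxy, mul_zero]

end RotationAverage

section Checkerboard

def checkerboard (r : ℕ) : Site d → ZMod r := fun n => (((∑ i, n i) % 2 : ℤ) : ZMod r)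

lemma checkerboard_mem_Xr : checkerboard (d := d) r ∈ Xr d r := by
  intro n m h
  have hstep : (∑ i, n i) % 2 - (∑ i, m i) % 2 = 1 ∨ (∑ i, n i) % 2 - (∑ i, m i) % 2 = -1 := by
    have := sum_sub_sum_eq_one_or_neg_one_of_adjacent h
    omega
  simp only [checkerboard, ← Int.cast_sub]
  rcases hstep with h | h <;> rw [h] <;> simp

lemma checkerboard_of_adjacent_zero {m : Site d} (h : adjacent 0 m) : checkerboard r m = 1 := by
  have := sum_sub_sum_eq_one_or_neg_one_of_adjacent h
  have hm : (∑ i, m i) % 2 = 1 := by simp only [Pi.zero_apply, Finset.sum_const_zero] at this; omega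
  simp [checkerboard, hm]

lemma checkerboard_zero : checkerboard (d := d) r 0 = 0 := by simp [checkerboard]

lemma update_checkerboard_mem_Xr : update (checkerboard (d := d) r) 0 2 ∈ Xr d r := by
  intro n m h
  by_cases hn : n = 0 <;> by_cases hm : m = 0
  · subst hn hm
    simp [adjacent] at h
  · subst hn
    rw [update_self, update_of_ne hm, checkerboard_of_adjacent_zero h]
    left; norm_num
  · subst hm
    rw [update_self, update_of_ne hn, checkerboard_of_adjacent_zero (adjacent_comm.1 h)]
    right; norm_num
  · rw [update_of_ne hn, update_of_ne hm]
    exact checkerboard_mem_Xr n m h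

lemma gibbsDiff_tiltedSlope_checkerboard (hr : 3 ≤ r) (j : Fin d) :
    gibbsDiff 0 (tiltedSlope j) (checkerboard r) (update (checkerboard r) 0 2) = -2 := by
  have hne : -unitVec (d := d) j ≠ 0 := neg_ne_zero.2 (unitVec_ne_zero j)
  have hleft : checkerboard (d := d) r (-unitVec j) = 1 := checkerboard_of_adjacent_zero <|
    adjacent_comm.1 (by simpa using adjacent_add_unitVec (-unitVec j) j)
  rw [gibbsDiff_tiltedSlope, finsum_eq_single _ (-unitVec j)]
  · simp only [slopeDiff, edgeSlope, neg_add_cancel, update_self, update_of_ne hne, hleft,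
      checkerboard_zero, Pi.neg_apply, unitVec_apply_self]
    rw [slope_of_sub_eq_one (by norm_num), slope_of_sub_eq_neg_one hr (by norm_num)]
    norm_num
  · intro n hn
    by_cases h0 : n = 0
    · simp [h0]
    · have h1 : n + unitVec j ≠ 0 := fun h => hn (eq_neg_of_add_eq_zero_left h)
      simp [slopeDiff, edgeSlope, update_of_ne h0, update_of_ne h1]

end Checkerboard

end TiltedGibbs

open TiltedGibbs Function

/-- For `d ≥ 2`, `r ∉ {1,2,4}`: there exists a shift-invariant Markov
cocycle on `X_r` which is the Gibbs cocycle of some nearest neighbor interaction but not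
of any shift-invariant one: `G^σ_{X_r} ≠ G_{X_r} ∩ M^σ_{X_r}`. -/
theorem exists_inv_markov_cocycle_gibbs_not_inv_gibbs
    (d r : ℕ) (hd : 2 ≤ d) (hr0 : 0 < r) (hr1 : r ≠ 1) (hr2 : r ≠ 2) (hr4 : r ≠ 4) :
    ∃ M : ↥(DeltaOf (Xr d r)) → ℝ,
      (IsCocycle (Xr d r) M ∧ IsMarkovProp (Xr d r) M ∧ IsShiftInvCocycle (Xr d r) M) ∧
      (∃ (fv : Site d → ZMod r → ℝ) (fe : Site d → Fin d → ZMod r → ZMod r → ℝ),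
        ∀ p : ↥(DeltaOf (Xr d r)), M p = gibbsDiff fv fe p.val.1 p.val.2) ∧
      ¬ (∃ (f : ZMod r → ℝ) (g : Fin d → ZMod r → ZMod r → ℝ),
        ∀ p : ↥(DeltaOf (Xr d r)),
          M p = gibbsDiff (fun _ => f) (fun _ => g) p.val.1 p.val.2) := by
  have : NeZero r := ⟨hr0.ne'⟩
  have hr3 : 3 ≤ r := by omega
  let j₀ : Fin d := ⟨0, by omega⟩
  refine ⟨fun p => gibbsDiff 0 (tiltedSlope j₀) p.val.1 p.val.2,
    ⟨isCocycle_gibbsDiff _ _ _, isMarkovProp_gibbsDiff _ _ _,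
      isShiftInvCocycle_tiltedSlope hr3 hr4 hd j₀⟩, ⟨0, tiltedSlope j₀, fun _ => rfl⟩, ?_⟩
  rintro ⟨f, g, hfg⟩
  set x := checkerboard (d := d) r
  set y := update x 0 2
  have hxy : {n | x n ≠ y n}.Finite :=
    (Set.finite_singleton 0).subset fun n hn => by_contra fun h0 => hn (update_of_ne h0 _ _).symm
  have hrotate : ∀ a : ZMod r, ((fun n => x n + a), (fun n => y n + a)) ∈ DeltaOf (Xr d r) :=
    fun a => ⟨fun n m h => by simpa using checkerboard_mem_Xr n m h,
      fun n m h => by simpa using update_checkerboard_mem_Xr n m h, by simpa using hxy⟩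
  have hsum := sum_gibbsDiff_add_const_eq_zero hr3 hr4 hd f g checkerboard_mem_Xr
    update_checkerboard_mem_Xr hxy
  have hconst : ∀ a : ZMod r,
      gibbsDiff (fun _ => f) (fun _ => g) (fun n => x n + a) (fun n => y n + a) = -2 := fun a => by
    rw [← hfg ⟨_, hrotate a⟩]
    exact (gibbsDiff_tiltedSlope_add_const j₀ x y a).trans
      (gibbsDiff_tiltedSlope_checkerboard hr3 j₀)
  rw [Finset.sum_congr rfl fun a _ => hconst a, Finset.sum_const, Finset.card_univ, ZMod.card,
    nsmul_eq_mul] at hsum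
  have hr : (r : ℝ) ≠ 0 := by exact_mod_cast hr0.ne'
  exact hr (by linarith)
end

section
/- Let d ≥ 2, let x̂ : ℤ^d → ℤ be a height function and F ⊆ ℤ^d a finite set, and let Ht_{x̂,F} := { ŷ a height function : ŷ_n = x̂_n for all n ∉ F }. Then Ht_{x̂,F} has a maximum element with respect to the pointwise partial order (ŷ ≥ ẑ iff ŷ_n ≥ ẑ_n for all n); moreover, if ŷ is this maximum, then for every n ∈ F, ŷ_n = min { x̂_k + ‖n−k‖₁ : k ∈ ∂F }. -/
/-!
A height function is 1-Lipschitz for the `ℓ¹` distance, and `x̂ n - x̂ k + ‖n - k‖₁` is always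
even. Hence the McShane extension `ŷ n = min_{k ∉ F} (x̂ k + ‖n - k‖₁)` is again a height
function: it is 1-Lipschitz as an infimum of 1-Lipschitz functions, and it has the parity of `x̂`,
so neighbouring values differ by exactly one. Every competitor is below it by the Lipschitz bound,
and the minimum may be restricted to `∂F` because a geodesic from `n ∈ F` to `k ∉ F` leaves `F`
through `∂F`.
-/

open scoped BigOperators

section L1Dist

variable {d : ℕ}

def l1Dist (n m : Site d) : ℤ :=
  ∑ i, |n i - m i|

theorem adjacent_iff_l1Dist {n m : Site d} : adjacent n m ↔ l1Dist n m = 1 :=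
  Iff.rfl

theorem l1Dist_nonneg (n m : Site d) : 0 ≤ l1Dist n m :=
  Finset.sum_nonneg fun _ _ => abs_nonneg _

@[simp]
theorem l1Dist_self (n : Site d) : l1Dist n n = 0 := by
  simp [l1Dist]

theorem l1Dist_comm (n m : Site d) : l1Dist n m = l1Dist m n := by
  simp only [l1Dist, abs_sub_comm]

theorem l1Dist_triangle (n m k : Site d) : l1Dist n k ≤ l1Dist n m + l1Dist m k := by
  rw [l1Dist, l1Dist, l1Dist, ← Finset.sum_add_distrib]
  exact Finset.sum_le_sum fun i _ => abs_sub_le _ _ _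

theorem adjacent.symm {n m : Site d} (h : adjacent n m) : adjacent m n := by
  rwa [adjacent_iff_l1Dist, l1Dist_comm]

theorem l1Dist_update_add (n k : Site d) (i : Fin d) (v : ℤ) :
    l1Dist (Function.update n i v) k + |n i - k i| = l1Dist n k + |v - k i| := by
  simp only [l1Dist]
  rw [← Finset.add_sum_erase _ _ (Finset.mem_univ i),
    ← Finset.add_sum_erase _ _ (Finset.mem_univ i),
    Finset.sum_congr rfl fun j hj => by rw [Function.update_of_ne (Finset.ne_of_mem_erase hj)]]
  simp only [Function.update_self]
  ring

theorem exists_adjacent_l1Dist_add_one {n k : Site d} (h : n ≠ k) :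
    ∃ m, adjacent n m ∧ l1Dist m k + 1 = l1Dist n k := by
  obtain ⟨i, hi⟩ := Function.ne_iff.mp h
  have hs : |(n i - k i).sign| = 1 := by
    rcases lt_or_gt_of_ne (sub_ne_zero.mpr hi) with hlt | hgt
    · simp [Int.sign_eq_neg_one_of_neg hlt]
    · simp [Int.sign_eq_one_of_pos hgt]
  have hstep : |n i - (n i - k i).sign - k i| + 1 = |n i - k i| := by
    rcases lt_or_gt_of_ne (sub_ne_zero.mpr hi) with hlt | hgt
    · rw [Int.sign_eq_neg_one_of_neg hlt, abs_of_neg hlt, abs_of_nonpos (by omega)]; ring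
    · rw [Int.sign_eq_one_of_pos hgt, abs_of_pos hgt, abs_of_nonneg (by omega)]; ring
  refine ⟨Function.update n i (n i - (n i - k i).sign), ?_, ?_⟩
  · have := l1Dist_update_add n n i (n i - (n i - k i).sign)
    rw [adjacent_iff_l1Dist, l1Dist_comm]
    simp_all
  · linarith [l1Dist_update_add n k i (n i - (n i - k i).sign)]

theorem l1Dist_induction {P : Site d → Prop} (k : Site d) (base : P k)
    (step : ∀ n m, adjacent n m → l1Dist m k + 1 = l1Dist n k → P m → P n) (n : Site d) :
    P n := by
  suffices ∀ N : ℕ, ∀ n, l1Dist n k = N → P n from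
    this _ n (Int.toNat_of_nonneg (l1Dist_nonneg n k)).symm
  intro N
  induction N with
  | zero =>
    intro n hn
    by_cases hnk : n = k
    · exact hnk ▸ base
    obtain ⟨m, -, hm⟩ := exists_adjacent_l1Dist_add_one hnk
    push_cast at hn
    linarith [l1Dist_nonneg m k]
  | succ N ih =>
    intro n hn
    by_cases hnk : n = k
    · exact hnk ▸ base
    obtain ⟨m, hnm, hm⟩ := exists_adjacent_l1Dist_add_one hnk
    exact step n m hnm hm (ih m (by push_cast at hn; linarith))

theorem exists_mem_siteBdry_l1Dist_add_le {F : Set (Site d)} {n k : Site d} (hn : n ∈ F)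
    (hk : k ∉ F) : ∃ b ∈ siteBdry F, l1Dist n b + l1Dist b k ≤ l1Dist n k := by
  revert hk
  refine l1Dist_induction (P := fun k => k ∉ F → ∃ b ∈ siteBdry F,
    l1Dist n b + l1Dist b k ≤ l1Dist n k) n (fun h => absurd hn h) ?_ k
  intro k m hkm hm ih hk
  by_cases hmF : m ∈ F
  · exact ⟨k, ⟨hk, m, hmF, hkm.symm⟩, by simp⟩
  obtain ⟨b, hb, hbm⟩ := ih hmF
  refine ⟨b, hb, ?_⟩
  rw [l1Dist_comm n m] at hbm
  rw [l1Dist_comm n k]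
  linarith [l1Dist_triangle b m k, l1Dist_comm m k, adjacent_iff_l1Dist.mp hkm]

end L1Dist

section HeightFunction

variable {d : ℕ} {x : Site d → ℤ}

theorem IsHeightFn.abs_sub_le_and_even (hx : IsHeightFn x) (n k : Site d) :
    |x n - x k| ≤ l1Dist n k ∧ Even (x n - x k + l1Dist n k) := by
  refine l1Dist_induction (P := fun n => |x n - x k| ≤ l1Dist n k ∧ Even (x n - x k + l1Dist n k))
    k (by simp) ?_ n
  rintro n m hnm hm ⟨hle, heven⟩
  have hxnm := (abs_eq zero_le_one).mp (hx n m hnm)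
  rw [abs_le] at hle ⊢
  rw [Int.even_iff] at heven ⊢
  omega

theorem IsHeightFn.abs_sub_le (hx : IsHeightFn x) (n k : Site d) : |x n - x k| ≤ l1Dist n k :=
  (hx.abs_sub_le_and_even n k).1

theorem IsHeightFn.even_sub_add_l1Dist (hx : IsHeightFn x) (n k : Site d) :
    Even (x n - x k + l1Dist n k) :=
  (hx.abs_sub_le_and_even n k).2

theorem isHeightFn_of_le_add_one_of_even {y : Site d → ℤ} (hx : IsHeightFn x)
    (hle : ∀ n m, adjacent n m → y n ≤ y m + 1) (heven : ∀ n, Even (y n - x n)) :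
    IsHeightFn y := by
  intro n m hnm
  have h₁ := hle n m hnm
  have h₂ := hle m n hnm.symm
  have hxnm := (abs_eq zero_le_one).mp (hx n m hnm)
  have hn := Int.even_iff.mp (heven n)
  have hm := Int.even_iff.mp (heven m)
  rw [abs_eq zero_le_one]
  omega

end HeightFunction

section McShane

variable {d : ℕ} {x : Site d → ℤ} {B : Set (Site d)}

/-- The largest 1-Lipschitz extension of `x` restricted to `B`. -/
noncomputable def mcShane (x : Site d → ℤ) (B : Set (Site d)) (n : Site d) : ℤ :=
  sInf {v | ∃ k ∈ B, v = x k + l1Dist n k}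

theorem isLeast_mcShane (hx : IsHeightFn x) (hB : B.Nonempty) (n : Site d) :
    IsLeast {v | ∃ k ∈ B, v = x k + l1Dist n k} (mcShane x B n) := by
  have hbdd : BddBelow {v | ∃ k ∈ B, v = x k + l1Dist n k} := by
    refine ⟨x n, ?_⟩
    rintro _ ⟨k, -, rfl⟩
    linarith [le_of_abs_le (hx.abs_sub_le n k)]
  obtain ⟨k, hk⟩ := hB
  exact ⟨Int.csInf_mem ⟨_, k, hk, rfl⟩ hbdd, fun v hv => csInf_le hbdd hv⟩

theorem IsHeightFn.le_mcShane {z : Site d → ℤ} (hz : IsHeightFn z) (hB : B.Nonempty)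
    (hzx : ∀ k ∈ B, z k = x k) (n : Site d) : z n ≤ mcShane x B n := by
  obtain ⟨k, hk⟩ := hB
  refine le_csInf ⟨_, k, hk, rfl⟩ ?_
  rintro _ ⟨k, hk, rfl⟩
  linarith [hzx k hk, le_of_abs_le (hz.abs_sub_le n k)]

theorem mcShane_eq_of_mem (hx : IsHeightFn x) {n : Site d} (hn : n ∈ B) :
    mcShane x B n = x n :=
  le_antisymm ((isLeast_mcShane hx ⟨n, hn⟩ n).2 ⟨n, hn, by simp⟩)
    (hx.le_mcShane ⟨n, hn⟩ (fun _ _ => rfl) n)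

theorem isHeightFn_mcShane (hx : IsHeightFn x) (hB : B.Nonempty) : IsHeightFn (mcShane x B) := by
  refine isHeightFn_of_le_add_one_of_even hx (fun n m hnm => ?_) (fun n => ?_)
  · obtain ⟨⟨k, hk, hmk⟩, -⟩ := isLeast_mcShane hx hB m
    have := (isLeast_mcShane hx hB n).2 ⟨k, hk, rfl⟩
    linarith [l1Dist_triangle n m k, adjacent_iff_l1Dist.mp hnm]
  · obtain ⟨⟨k, -, hnk⟩, -⟩ := isLeast_mcShane hx hB n
    have h := hx.even_sub_add_l1Dist k n
    rw [l1Dist_comm] at h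
    rwa [hnk, show x k + l1Dist n k - x n = x k - x n + l1Dist n k by ring]

theorem isLeast_mcShane_compl_siteBdry (hx : IsHeightFn x) {F : Set (Site d)}
    (hF : Fᶜ.Nonempty) {n : Site d} (hn : n ∈ F) :
    IsLeast {v | ∃ k ∈ siteBdry F, v = x k + l1Dist n k} (mcShane x Fᶜ n) := by
  obtain ⟨⟨k, hk, hnk⟩, hleast⟩ := isLeast_mcShane hx hF n
  obtain ⟨b, hb, hbk⟩ := exists_mem_siteBdry_l1Dist_add_le hn hk
  have hb_le : x b + l1Dist n b ≤ mcShane x Fᶜ n := by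
    linarith [le_of_abs_le (hx.abs_sub_le b k)]
  refine ⟨⟨b, hb, le_antisymm (hleast ⟨b, hb.1, rfl⟩) hb_le⟩, ?_⟩
  rintro _ ⟨k, hk, rfl⟩
  exact hleast ⟨k, hk.1, rfl⟩

end McShane

/-- For `d ≥ 2`, a height function `x̂` and a finite set `F ⊆ ℤ^d`, the
set of height functions agreeing with `x̂` off `F` has a maximum with respect to the
pointwise order; any such maximum `ŷ` satisfies, for every `n ∈ F`,
`ŷ_n = min { x̂_k + ‖n - k‖₁ : k ∈ ∂F }`. -/
theorem maximal_height_function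
    (d : ℕ) (hd : 2 ≤ d) (xh : Site d → ℤ) (hx : IsHeightFn xh)
    (F : Set (Site d)) (hF : F.Finite) :
    (∃ yh : Site d → ℤ, IsHeightFn yh ∧ (∀ n ∉ F, yh n = xh n) ∧
      ∀ zh : Site d → ℤ, IsHeightFn zh → (∀ n ∉ F, zh n = xh n) →
        ∀ n : Site d, zh n ≤ yh n) ∧
    (∀ yh : Site d → ℤ, IsHeightFn yh → (∀ n ∉ F, yh n = xh n) →
      (∀ zh : Site d → ℤ, IsHeightFn zh → (∀ n ∉ F, zh n = xh n) →
        ∀ n : Site d, zh n ≤ yh n) →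
      ∀ n ∈ F,
        IsLeast {v : ℤ | ∃ k ∈ siteBdry F, v = xh k + ∑ i, |n i - k i|} (yh n)) := by
  have : Nonempty (Fin d) := ⟨⟨0, by omega⟩⟩
  have hFc : Fᶜ.Nonempty := hF.infinite_compl.nonempty
  have hy := isHeightFn_mcShane hx hFc
  have hyx : ∀ n ∉ F, mcShane xh Fᶜ n = xh n := fun n hn => mcShane_eq_of_mem hx hn
  have hmax : ∀ zh : Site d → ℤ, IsHeightFn zh → (∀ n ∉ F, zh n = xh n) →
      ∀ n, zh n ≤ mcShane xh Fᶜ n := fun zh hz hzx => hz.le_mcShane hFc hzx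
  refine ⟨⟨_, hy, hyx, hmax⟩, fun yh hyh hyhx hyhmax n hn => ?_⟩
  rw [le_antisymm (hmax yh hyh hyhx n) (hyhmax _ hy hyx n)]
  exact isLeast_mcShane_compl_siteBdry hx hFc hn
end
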